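/- arXiv:1304.4955 — 8 statements merged into one kernel-verified Lean document; each statement's English description precedes it below -/
import Mathlib

section
/- Let γ(θ) = (cos θ, sin θ, 1)/√2 and let ρ_θ be the orthogonal projection of ℝ³ onto the line span(γ(θ)). There exists a constant C > 0 such that for all distinct points x, y ∈ ℝ³ and all δ > 0, the Lebesgue measure of the set {θ ∈ [0, 2π) : |ρ_θ(x − y)| ≤ δ} is at most C·(δ/|x − y|)^{1/2}. -/
open Set Metric MeasureTheory Real
open scoped RealInnerProductSpace ENNReal

/-- The vector `(x, y, z)` of `ℝ³` as a Euclidean space. -/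
noncomputable def e3 (x y z : ℝ) : EuclideanSpace ℝ (Fin 3) :=
  (WithLp.equiv 2 (Fin 3 → ℝ)).symm ![x, y, z]

/-- The special non-degenerate curve `γ(θ) = (cos θ, sin θ, 1)/√2`. -/
noncomputable def specialCurve (θ : ℝ) : EuclideanSpace ℝ (Fin 3) :=
  e3 (Real.cos θ / Real.sqrt 2) (Real.sin θ / Real.sqrt 2) (1 / Real.sqrt 2)

/-- The orthogonal projection of `x` onto the line spanned by `v` (for `v ≠ 0`). -/
noncomputable def lineProj (v x : EuclideanSpace ℝ (Fin 3)) : EuclideanSpace ℝ (Fin 3) :=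
  (⟪x, v⟫ / ⟪v, v⟫) • v

/-!
Write `z = x - y = (a, b, c)` and `a cos θ + b sin θ = R cos (θ - φ)` with `R = √(a² + b²)`.
Since `γ(θ)` is a unit vector, `|ρ_θ z| = |R cos (θ - φ) + c| / √2`. If `R < |z| / 4`, the
constant `c` dominates and the set is empty unless `δ ≳ |z|`, where the bound is trivial.
Otherwise the set is where `cos (θ - φ)` lies in an interval of length `≲ δ / |z|`. On each
interval of length `π` where `cos` is monotone, `(u - v)² ≤ 16 |cos u - cos v|`
(Jordan's inequality `sin t ≥ 2t/π`), so each of the at most four pieces has diameter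
`≲ (δ / |z|)^{1/2}`.
-/

theorem sq_sub_le_sixteen_mul_cos_sub_cos {α β : ℝ} (hα : 0 ≤ α) (hαβ : α ≤ β) (hβ : β ≤ π) :
    (β - α) ^ 2 ≤ 16 * (cos α - cos β) := by
  obtain ⟨d, rfl⟩ : ∃ d, β = α + 2 * d := ⟨(β - α) / 2, by ring⟩
  have hcos : cos α - cos (α + 2 * d) = 2 * sin (α + d) * sin d := by
    rw [cos_sub_cos, show (α - (α + 2 * d)) / 2 = -d by ring, sin_neg]; ring_nf
  -- `sin (α + d) - sin d = 2 sin (α / 2) cos (α / 2 + d)`, with both factors nonnegative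
  have hsin : sin d ≤ sin (α + d) := by
    have h := sin_sub_sin (α + d) d
    rw [show (α + d - d) / 2 = α / 2 by ring] at h
    have h1 : 0 ≤ sin (α / 2) := sin_nonneg_of_nonneg_of_le_pi (by linarith) (by linarith)
    have h2 : 0 ≤ cos ((α + d + d) / 2) :=
      cos_nonneg_of_neg_pi_div_two_le_of_le (by linarith) (by linarith)
    nlinarith [mul_nonneg h1 h2]
  have hjordan : 2 / π * d ≤ sin d := mul_le_sin (by linarith) (by linarith)
  have hsq : (α + 2 * d - α) ^ 2 = π ^ 2 * (2 / π * d) ^ 2 := by field_simp; ring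
  have hπ : π ^ 2 ≤ 16 := by nlinarith [pi_pos, pi_le_four]
  have hs : 0 ≤ 2 / π * d := mul_nonneg (by positivity) (by linarith)
  rw [hcos, hsq]
  nlinarith [mul_le_mul hjordan (hjordan.trans hsin) hs (hs.trans hjordan), sq_nonneg (2 / π * d)]

theorem sq_sub_le_sixteen_mul_abs_cos_sub_cos (k : ℤ) {u v : ℝ}
    (hu : u ∈ Icc (k * π) ((k + 1) * π)) (hv : v ∈ Icc (k * π) ((k + 1) * π)) :
    (u - v) ^ 2 ≤ 16 * |cos u - cos v| := by
  wlog huv : u ≤ v generalizing u v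
  · rw [← neg_sub, neg_sq, abs_sub_comm]; exact this hv hu (le_of_not_ge huv)
  have key := sq_sub_le_sixteen_mul_cos_sub_cos (α := u - k * π) (β := v - k * π)
    (by linarith [hu.1]) (by linarith) (by linarith [hv.2])
  rw [cos_sub_int_mul_pi, cos_sub_int_mul_pi, ← mul_sub, sub_sub_sub_cancel_right] at key
  calc (u - v) ^ 2 = (v - u) ^ 2 := by ring
    _ ≤ 16 * ((-1) ^ k * (cos u - cos v)) := key
    _ ≤ 16 * |(-1) ^ k * (cos u - cos v)| := by gcongr; exact le_abs_self _
    _ = 16 * |cos u - cos v| := by rw [abs_mul, abs_neg_one_zpow, one_mul]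

theorem volume_cos_sub_mem_Icc_inter_Icc_le (φ a b : ℝ) (k : ℤ) :
    volume {θ ∈ Icc (φ + k * π) (φ + (k + 1) * π) | cos (θ - φ) ∈ Icc a b} ≤
      ENNReal.ofReal (4 * √(b - a)) := by
  refine (Real.volume_le_diam _).trans (Metric.ediam_le fun θ hθ θ' hθ' => ?_)
  rw [edist_dist, Real.dist_eq]
  refine ENNReal.ofReal_le_ofReal ((Real.abs_le_sqrt (y := 16 * (b - a)) ?_).trans_eq ?_)
  · have hmem (t : ℝ) (ht : t ∈ Icc (φ + k * π) (φ + (k + 1) * π)) :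
        t - φ ∈ Icc (k * π) ((k + 1) * π) := ⟨by linarith [ht.1], by linarith [ht.2]⟩
    calc (θ - θ') ^ 2 = ((θ - φ) - (θ' - φ)) ^ 2 := by ring
      _ ≤ 16 * |cos (θ - φ) - cos (θ' - φ)| :=
        sq_sub_le_sixteen_mul_abs_cos_sub_cos k (hmem θ hθ.1) (hmem θ' hθ'.1)
      _ ≤ 16 * (b - a) := by gcongr; exact Real.dist_le_of_mem_Icc hθ.2 hθ'.2
  · rw [Real.sqrt_mul (by norm_num), show (16 : ℝ) = 4 ^ 2 by norm_num, Real.sqrt_sq (by norm_num)]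

theorem volume_cos_sub_mem_Icc_le (a b : ℝ) {φ : ℝ} (hφ : φ ∈ Ioc (-π) π) :
    volume {θ ∈ Ico 0 (2 * π) | cos (θ - φ) ∈ Icc a b} ≤ ENNReal.ofReal (16 * √(b - a)) := by
  have hcover : {θ ∈ Ico 0 (2 * π) | cos (θ - φ) ∈ Icc a b} ⊆
      ⋃ k ∈ Finset.Icc (-1 : ℤ) 2,
        {θ ∈ Icc (φ + k * π) (φ + (k + 1) * π) | cos (θ - φ) ∈ Icc a b} := by
    rintro θ ⟨⟨h0, h2π⟩, hcos⟩
    have hq₁ : -1 ≤ (θ - φ) / π := by rw [le_div_iff₀ pi_pos]; linarith [hφ.2]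
    have hq₂ : (θ - φ) / π < 3 := by rw [div_lt_iff₀ pi_pos]; linarith [hφ.1]
    have hk₁ : (⌊(θ - φ) / π⌋ : ℝ) * π ≤ θ - φ := (le_div_iff₀ pi_pos).1 (Int.floor_le _)
    have hk₂ : θ - φ < (⌊(θ - φ) / π⌋ + 1) * π := (div_lt_iff₀ pi_pos).1 (Int.lt_floor_add_one _)
    refine mem_iUnion₂.2
      ⟨⌊(θ - φ) / π⌋, Finset.mem_Icc.2 ⟨?_, ?_⟩, ⟨by linarith, by linarith⟩, hcos⟩
    · exact Int.le_floor.2 (by exact_mod_cast hq₁)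
    · exact Int.lt_add_one_iff.1 (Int.floor_lt.2 (by exact_mod_cast hq₂))
  calc _ ≤ _ := measure_mono hcover
    _ ≤ ∑ k ∈ Finset.Icc (-1 : ℤ) 2, ENNReal.ofReal (4 * √(b - a)) :=
        (measure_biUnion_finset_le _ _).trans (Finset.sum_le_sum fun k _ =>
          volume_cos_sub_mem_Icc_inter_Icc_le φ a b k)
    _ = ENNReal.ofReal (16 * √(b - a)) := by
        rw [Finset.sum_const, show (Finset.Icc (-1 : ℤ) 2).card = 4 from rfl, nsmul_eq_mul,
          Nat.cast_ofNat, ← ENNReal.ofReal_ofNat 4, ← ENNReal.ofReal_mul (by norm_num)]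
        ring_nf

theorem exists_mul_cos_add_mul_sin_eq (A B : ℝ) :
    ∃ φ ∈ Ioc (-π) π, ∀ θ, A * cos θ + B * sin θ = √(A ^ 2 + B ^ 2) * cos (θ - φ) := by
  set w : ℂ := ⟨A, B⟩
  refine ⟨w.arg, ⟨Complex.neg_pi_lt_arg w, Complex.arg_le_pi w⟩, fun θ => ?_⟩
  have hre : ‖w‖ * cos w.arg = A := Complex.norm_mul_cos_arg w
  have him : ‖w‖ * sin w.arg = B := Complex.norm_mul_sin_arg w
  rw [show A ^ 2 + B ^ 2 = w.re ^ 2 + w.im ^ 2 from rfl, ← Complex.norm_eq_sqrt_sq_add_sq, cos_sub]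
  linear_combination -cos θ * hre - sin θ * him

theorem volume_abs_mul_cos_sub_add_le_le_of_lt_quarter {R c r ε : ℝ} (φ : ℝ) (hR : 0 ≤ R)
    (hRr : R < r / 4) (hRc : R ^ 2 + c ^ 2 = r ^ 2) :
    volume {θ ∈ Ico 0 (2 * π) | |R * cos (θ - φ) + c| ≤ ε} ≤ ENNReal.ofReal (48 * √(ε / r)) := by
  have hr : 0 < r := by linarith
  have hc : 3 * r / 4 ≤ |c| := by
    have h := sq_le_sq.1 (show (3 * r / 4) ^ 2 ≤ c ^ 2 by nlinarith)
    rwa [abs_of_pos (by positivity)] at h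
  have hlower (θ : ℝ) : r / 2 < |R * cos (θ - φ) + c| := by
    have h₁ : |R * cos (θ - φ)| ≤ R := by
      rw [abs_mul, abs_of_nonneg hR]; exact mul_le_of_le_one_right hR (abs_cos_le_one _)
    have h₂ := abs_sub_abs_le_abs_sub c (-(R * cos (θ - φ)))
    rw [abs_neg, sub_neg_eq_add, add_comm] at h₂
    linarith
  by_cases hε : ε < r / 2
  · have hempty : {θ ∈ Ico 0 (2 * π) | |R * cos (θ - φ) + c| ≤ ε} = ∅ :=
      eq_empty_of_forall_notMem fun θ hθ => by linarith [hθ.2, hlower θ]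
    rw [hempty, measure_empty]; exact zero_le
  · have hsqrt : 1 / 2 ≤ √(ε / r) := Real.le_sqrt_of_sq_le (by rw [le_div_iff₀ hr]; linarith)
    calc _ ≤ volume (Ico 0 (2 * π)) := measure_mono (sep_subset _ _)
      _ = ENNReal.ofReal (2 * π) := by rw [Real.volume_Ico, sub_zero]
      _ ≤ ENNReal.ofReal (48 * √(ε / r)) := ENNReal.ofReal_le_ofReal (by linarith [pi_le_four])

theorem volume_abs_mul_cos_sub_add_le_le_of_quarter_le {R c r ε φ : ℝ} (hφ : φ ∈ Ioc (-π) π)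
    (hr : 0 < r) (hRr : r / 4 ≤ R) (hε : 0 ≤ ε) :
    volume {θ ∈ Ico 0 (2 * π) | |R * cos (θ - φ) + c| ≤ ε} ≤ ENNReal.ofReal (48 * √(ε / r)) := by
  have hR : 0 < R := by linarith
  have hsub : {θ ∈ Ico 0 (2 * π) | |R * cos (θ - φ) + c| ≤ ε} ⊆
      {θ ∈ Ico 0 (2 * π) | cos (θ - φ) ∈ Icc ((-c - ε) / R) ((-c + ε) / R)} := by
    rintro θ ⟨hθ, hle⟩
    obtain ⟨h₁, h₂⟩ := abs_le.1 hle
    exact ⟨hθ, (div_le_iff₀' hR).2 (by linarith), (le_div_iff₀' hR).2 (by linarith)⟩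
  have hlen : (-c + ε) / R - (-c - ε) / R ≤ 3 ^ 2 * (ε / r) :=
    calc (-c + ε) / R - (-c - ε) / R = 2 * ε / R := by ring
      _ ≤ 2 * ε / (r / 4) := div_le_div_of_nonneg_left (by positivity) (by positivity) hRr
      _ = 8 * (ε / r) := by field_simp; ring
      _ ≤ 3 ^ 2 * (ε / r) := by nlinarith [div_nonneg hε hr.le]
  calc _ ≤ _ := measure_mono hsub
    _ ≤ _ := volume_cos_sub_mem_Icc_le _ _ hφ
    _ ≤ ENNReal.ofReal (48 * √(ε / r)) := by
        refine ENNReal.ofReal_le_ofReal ?_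
        have := Real.sqrt_le_sqrt hlen
        rw [Real.sqrt_mul (by norm_num), Real.sqrt_sq (by norm_num)] at this
        linarith

theorem volume_abs_mul_cos_add_mul_sin_add_le_le {A B c r ε : ℝ} (hr : 0 < r) (hε : 0 ≤ ε)
    (hABc : A ^ 2 + B ^ 2 + c ^ 2 = r ^ 2) :
    volume {θ ∈ Ico 0 (2 * π) | |A * cos θ + B * sin θ + c| ≤ ε} ≤
      ENNReal.ofReal (48 * √(ε / r)) := by
  obtain ⟨φ, hφ, hAB⟩ := exists_mul_cos_add_mul_sin_eq A B
  simp_rw [hAB]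
  rcases lt_or_ge √(A ^ 2 + B ^ 2) (r / 4) with hsmall | hlarge
  · refine volume_abs_mul_cos_sub_add_le_le_of_lt_quarter φ (Real.sqrt_nonneg _) hsmall ?_
    rw [Real.sq_sqrt (by positivity)]
    linarith
  · exact volume_abs_mul_cos_sub_add_le_le_of_quarter_le hφ hr hlarge hε

theorem norm_lineProj_of_norm_eq_one {v : EuclideanSpace ℝ (Fin 3)} (hv : ‖v‖ = 1)
    (x : EuclideanSpace ℝ (Fin 3)) : ‖lineProj v x‖ = |⟪x, v⟫| := by
  rw [lineProj, real_inner_self_eq_norm_sq, hv, one_pow, div_one, norm_smul, hv, mul_one,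
    Real.norm_eq_abs]

theorem inner_specialCurve (z : EuclideanSpace ℝ (Fin 3)) (θ : ℝ) :
    ⟪z, specialCurve θ⟫ = (z 0 * cos θ + z 1 * sin θ + z 2) / √2 := by
  simp only [specialCurve, e3, one_div, WithLp.equiv_symm_apply, PiLp.inner_apply,
    RCLike.inner_apply, ringHom_apply, Fin.sum_univ_three, Fin.isValue, Matrix.cons_val_zero,
    Matrix.cons_val_one, Matrix.cons_val]
  ring

theorem norm_specialCurve (θ : ℝ) : ‖specialCurve θ‖ = 1 := by
  refine (pow_eq_one_iff_of_nonneg (norm_nonneg _) two_ne_zero).1 ?_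
  rw [← real_inner_self_eq_norm_sq, inner_specialCurve]
  simp only [specialCurve, e3, one_div, WithLp.equiv_symm_apply, Fin.isValue,
    Matrix.cons_val_zero, Matrix.cons_val_one, Matrix.cons_val]
  field_simp
  rw [cos_sq_add_sin_sq, Real.sq_sqrt zero_le_two]
  norm_num

/-- Lemma 4.3 (universal bound): for the projections `ρ_θ` onto the lines spanned by
`γ(θ) = (cos θ, sin θ, 1)/√2`, the set of `θ ∈ [0, 2π)` with `|ρ_θ(x - y)| ≤ δ` has
measure `≲ (δ / |x - y|)^{1/2}`. -/
theorem sublevel_estimate_lines :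
    ∃ C : ℝ, 0 < C ∧
      ∀ x y : EuclideanSpace ℝ (Fin 3), x ≠ y → ∀ δ : ℝ, 0 < δ →
        volume {θ ∈ Set.Ico 0 (2 * π) | ‖lineProj (specialCurve θ) (x - y)‖ ≤ δ} ≤
          ENNReal.ofReal (C * Real.sqrt (δ / ‖x - y‖)) := by
  refine ⟨96, by norm_num, fun x y hxy δ hδ => ?_⟩
  set z := x - y
  have hz : 0 < ‖z‖ := norm_pos_iff.2 (sub_ne_zero.2 hxy)
  have hnorm : z 0 ^ 2 + z 1 ^ 2 + z 2 ^ 2 = ‖z‖ ^ 2 := by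
    rw [EuclideanSpace.real_norm_sq_eq, Fin.sum_univ_three]
  simp_rw [norm_lineProj_of_norm_eq_one (norm_specialCurve _), inner_specialCurve, abs_div,
    abs_of_pos (show (0 : ℝ) < √2 by positivity), div_le_iff₀ (show (0 : ℝ) < √2 by positivity)]
  refine (volume_abs_mul_cos_add_mul_sin_add_le_le hz (by positivity) hnorm).trans
    (ENNReal.ofReal_le_ofReal ?_)
  have hsqrt2 : √2 ≤ 2 ^ 2 := by nlinarith [Real.sq_sqrt zero_le_two, Real.sqrt_nonneg 2]
  have := Real.sqrt_le_sqrt (show δ * √2 / ‖z‖ ≤ 2 ^ 2 * (δ / ‖z‖) by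
    rw [mul_comm δ, mul_div_assoc]; gcongr)
  rw [Real.sqrt_mul (by norm_num), Real.sqrt_sq (by norm_num)] at this
  linarith
end

section
/- Let γ(θ) = (cos θ, sin θ, 1)/√2, b_θ = span((cos θ, sin θ, −1)), and let π̃_θ be the orthogonal projection of ℝ³ onto the plane Ṽ_θ = b_θ^⊥. Let 1/2 < s < 1 and let μ be a Borel probability measure on ℝ³ with support contained in the ball B(0,1) and with finite s-energy I_s(μ) < ∞. Then ∫₀^{2π} I_s(π̃_{θ♯}μ) dθ < ∞, where π̃_{θ♯}μ is the pushforward of μ under π̃_θ and I_s(π̃_{θ♯}μ) = ∬ |π̃_θ(x) − π̃_θ(y)|^{−s} dμ(x) dμ(y). -/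
/-! Write `w = x - y` in cylindrical coordinates `(ρ cos φ, ρ sin φ, w₂)`. Then
`2 ‖π̃_θ w‖² = sin²(θ - φ) ‖w‖² + (ρ + cos(θ - φ) w₂)²`, so `‖π̃_θ w‖ ≥ |sin(θ - φ)| ‖w‖ / √2`.
For `s < 1` the kernel `|sin u|^{-s}` is integrable over a period (Jordan's inequality
`|sin u| ≥ 2|u|/π` near its zeros), hence `∫ |π̃_θ x - π̃_θ y|^{-s} dθ ≤ C |x - y|^{-s}` with `C`
independent of `x, y`, and Tonelli bounds the integrated energy by `C · I_s(μ)`. -/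

open Set Metric MeasureTheory Real
open scoped RealInnerProductSpace ENNReal

/-- The direction `(cos θ, sin θ, -1)` spanning the line `b_θ`. -/
noncomputable def bVec (θ : ℝ) : EuclideanSpace ℝ (Fin 3) :=
  e3 (Real.cos θ) (Real.sin θ) (-1)

/-- The orthogonal projection `π̃_θ` of `ℝ³` onto the plane `Ṽ_θ = b_θ^⊥`. -/
noncomputable def tildeProj (θ : ℝ) (x : EuclideanSpace ℝ (Fin 3)) :
    EuclideanSpace ℝ (Fin 3) :=
  x - lineProj (bVec θ) x

/-- The `s`-energy `I_s(μ) = ∬ |x - y|^{-s} dμ(x) dμ(y)` of a measure on `ℝ³`. -/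
noncomputable def rieszEnergy (s : ℝ) (μ : Measure (EuclideanSpace ℝ (Fin 3))) : ℝ≥0∞ :=
  ∫⁻ x, ∫⁻ y, edist x y ^ (-s) ∂μ ∂μ

local notation "ℝ³" => EuclideanSpace ℝ (Fin 3)

namespace Function.Periodic

theorem setLIntegral_Ioc_add_eq {g : ℝ → ℝ≥0∞} {T : ℝ} (hg : Periodic g T) (hT : 0 < T)
    (t u : ℝ) : ∫⁻ x in Ioc t (t + T), g x = ∫⁻ x in Ioc u (u + T), g x := by
  have := Fact.mk hT
  simp only [← hg.lift_coe, AddCircle.lintegral_preimage]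

theorem setLIntegral_Ioc_comp_sub_right {g : ℝ → ℝ≥0∞} {T : ℝ} (hg : Periodic g T)
    (hT : 0 < T) (t φ : ℝ) : ∫⁻ x in Ioc t (t + T), g (x - φ) = ∫⁻ x in Ioc t (t + T), g x := by
  have hshift := (measurePreserving_sub_right volume φ).setLIntegral_comp_preimage_emb
    (MeasurableEquiv.subRight φ).measurableEmbedding g (Ioc (t - φ) (t - φ + T))
  have hpre : (· - φ) ⁻¹' Ioc (t - φ) (t - φ + T) = Ioc t (t + T) := by
    rw [preimage_sub_const_Ioc]; congr 1 <;> ring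
  rw [hpre] at hshift
  rw [hshift, hg.setLIntegral_Ioc_add_eq hT (t - φ) t]

end Function.Periodic

theorem ENNReal.rpow_neg_le_rpow_neg {a b : ℝ≥0∞} {s : ℝ} (hs : 0 ≤ s) (h : a ≤ b) :
    b ^ (-s) ≤ a ^ (-s) := by
  rw [ENNReal.rpow_neg, ENNReal.rpow_neg]
  exact ENNReal.inv_le_inv.mpr (ENNReal.rpow_le_rpow h hs)

theorem ENNReal.rpow_neg_le_of_mul_le {a b c d : ℝ≥0∞} {s : ℝ} (hs : 0 ≤ s) (ha : a ≠ ⊤)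
    (hb : b ≠ ⊤) (hc₀ : c ≠ 0) (hc : c ≠ ⊤) (hd : d ≠ ⊤) (h : a * b ≤ c * d) :
    d ^ (-s) ≤ c ^ s * (a ^ (-s) * b ^ (-s)) := by
  have hcd : c ^ (-s) * d ^ (-s) ≤ a ^ (-s) * b ^ (-s) := by
    rw [← ENNReal.mul_rpow_of_ne_top hc hd, ← ENNReal.mul_rpow_of_ne_top ha hb]
    exact ENNReal.rpow_neg_le_rpow_neg hs h
  calc d ^ (-s) = c ^ s * (c ^ (-s) * d ^ (-s)) := by
        rw [← mul_assoc, ← ENNReal.rpow_add _ _ hc₀ hc, add_neg_cancel, ENNReal.rpow_zero,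
          one_mul]
    _ ≤ c ^ s * (a ^ (-s) * b ^ (-s)) := by gcongr

theorem lintegral_ball_enorm_rpow_neg_lt_top {E : Type*} [NormedAddCommGroup E]
    [NormedSpace ℝ E] [FiniteDimensional ℝ E] [MeasurableSpace E] [BorelSpace E]
    (μ : Measure E) [μ.IsAddHaarMeasure] (hE : 1 ≤ Module.finrank ℝ E) {s : ℝ}
    (hs : s < Module.finrank ℝ E) (r : ℝ) :
    ∫⁻ x in ball 0 r, ‖x‖ₑ ^ (-s) ∂μ < ⊤ := by
  have hint : IntegrableOn (fun x : E => ‖x‖ ^ (-s)) (ball 0 r) μ :=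
    integrableOn_ball_of_norm_le_rpow (C := 1) hE hs
      (ae_of_all _ fun x => by simp [abs_of_nonneg (Real.rpow_nonneg (norm_nonneg x) _)])
      (measurable_norm.pow_const _).aestronglyMeasurable
  have : Nontrivial E := Module.nontrivial_of_finrank_pos (R := ℝ) (by omega)
  refine lt_of_eq_of_lt (setLIntegral_congr_fun_ae measurableSet_ball ?_) hint.2
  filter_upwards [μ.ae_ne 0] with x hx _
  rw [← ofReal_norm, Real.enorm_eq_ofReal (Real.rpow_nonneg (norm_nonneg x) _),
    ENNReal.ofReal_rpow_of_pos (norm_pos_iff.mpr hx)]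

theorem periodic_abs_sin_rpow_neg (s : ℝ) :
    Function.Periodic (fun u => ENNReal.ofReal |Real.sin u| ^ (-s)) π := fun u => by
  simp only [Real.sin_add_pi, abs_neg]

theorem abs_sin_rpow_neg_le {s : ℝ} (hs : 0 ≤ s) {u : ℝ} (hu : |u| ≤ π / 2) :
    ENNReal.ofReal |Real.sin u| ^ (-s) ≤ ENNReal.ofReal (2 / π) ^ (-s) * ‖u‖ₑ ^ (-s) := by
  calc ENNReal.ofReal |Real.sin u| ^ (-s)
      ≤ ENNReal.ofReal (2 / π * |u|) ^ (-s) :=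
        ENNReal.rpow_neg_le_rpow_neg hs (ENNReal.ofReal_le_ofReal (Real.mul_abs_le_abs_sin hu))
    _ = ENNReal.ofReal (2 / π) ^ (-s) * ‖u‖ₑ ^ (-s) := by
        rw [ENNReal.ofReal_mul (by positivity), ← Real.enorm_eq_ofReal_abs,
          ENNReal.mul_rpow_of_ne_top ENNReal.ofReal_ne_top enorm_ne_top]

theorem lintegral_abs_sin_rpow_neg_Ioc_lt_top {s : ℝ} (hs : 0 ≤ s) (hs' : s < 1) :
    ∫⁻ u in Ioc (-(π / 2)) (π / 2), ENNReal.ofReal |Real.sin u| ^ (-s) < ⊤ := by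
  have hball : Ioc (-(π / 2)) (π / 2) =ᵐ[volume] ball (0 : ℝ) (π / 2) := by
    rw [Real.ball_eq_Ioo, zero_sub, zero_add]
    exact Ioo_ae_eq_Ioc.symm
  rw [setLIntegral_congr hball]
  calc ∫⁻ u in ball 0 (π / 2), ENNReal.ofReal |Real.sin u| ^ (-s)
      ≤ ∫⁻ u in ball 0 (π / 2), ENNReal.ofReal (2 / π) ^ (-s) * ‖u‖ₑ ^ (-s) :=
        setLIntegral_mono' measurableSet_ball fun u hu =>
          abs_sin_rpow_neg_le hs (by simpa [Real.norm_eq_abs] using (mem_ball_zero_iff.mp hu).le)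
    _ = ENNReal.ofReal (2 / π) ^ (-s) * ∫⁻ u in ball 0 (π / 2), ‖u‖ₑ ^ (-s) :=
        lintegral_const_mul' _ _ (ENNReal.rpow_ne_top_of_ne_zero (by simp [Real.pi_pos])
          ENNReal.ofReal_ne_top)
    _ < ⊤ := ENNReal.mul_lt_top (ENNReal.rpow_ne_top_of_ne_zero (by simp [Real.pi_pos])
          ENNReal.ofReal_ne_top).lt_top
        (lintegral_ball_enorm_rpow_neg_lt_top volume (by simp) (by simpa using hs') _)

theorem lintegral_abs_sin_rpow_neg_lt_top {s : ℝ} (hs : 0 ≤ s) (hs' : s < 1) :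
    ∫⁻ θ in Ico 0 (2 * π), ENNReal.ofReal |Real.sin θ| ^ (-s) < ⊤ := by
  have hperiod (t : ℝ) := (periodic_abs_sin_rpow_neg s).setLIntegral_Ioc_add_eq Real.pi_pos
    t (-(π / 2))
  have hsplit : Ioc 0 (2 * π) = Ioc 0 (0 + π) ∪ Ioc (0 + π) (0 + π + π) := by
    rw [Ioc_union_Ioc_eq_Ioc (by linarith [Real.pi_pos]) (by linarith [Real.pi_pos])]
    ring_nf
  rw [setLIntegral_congr Ico_ae_eq_Ioc, hsplit]
  refine (lintegral_union_le _ _ _).trans_lt (ENNReal.add_lt_top.mpr ⟨?_, ?_⟩) <;>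
  · rw [hperiod, show -(π / 2) + π = π / 2 by ring]
    exact lintegral_abs_sin_rpow_neg_Ioc_lt_top hs hs'

theorem lintegral_abs_sin_sub_rpow_neg_eq (s φ : ℝ) :
    ∫⁻ θ in Ico 0 (2 * π), ENNReal.ofReal |Real.sin (θ - φ)| ^ (-s)
      = ∫⁻ θ in Ico 0 (2 * π), ENNReal.ofReal |Real.sin θ| ^ (-s) := by
  have hperiod : Function.Periodic (fun u => ENNReal.ofReal |Real.sin u| ^ (-s)) (2 * π) :=
    Real.sin_periodic.comp fun t => ENNReal.ofReal |t| ^ (-s)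
  simp only [setLIntegral_congr Ico_ae_eq_Ioc]
  simpa only [zero_add] using hperiod.setLIntegral_Ioc_comp_sub_right (by positivity) 0 φ

theorem inner_bVec (θ : ℝ) (w : ℝ³) :
    ⟪w, bVec θ⟫ = w 0 * Real.cos θ + w 1 * Real.sin θ - w 2 := by
  simp [PiLp.inner_apply, bVec, e3, Fin.sum_univ_three]
  ring

theorem inner_bVec_self (θ : ℝ) : ⟪bVec θ, bVec θ⟫ = 2 := by
  rw [inner_bVec]
  simp [bVec, e3]
  nlinarith [Real.sin_sq_add_cos_sq θ]

theorem tildeProj_eq (θ : ℝ) (x : ℝ³) :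
    tildeProj θ x = x - (⟪x, bVec θ⟫ / 2) • bVec θ := by
  rw [tildeProj, lineProj, inner_bVec_self]

theorem tildeProj_sub (θ : ℝ) (x y : ℝ³) :
    tildeProj θ x - tildeProj θ y = tildeProj θ (x - y) := by
  simp only [tildeProj_eq, inner_sub_left, sub_div, sub_smul]
  abel

theorem continuous_tildeProj :
    Continuous fun q : ℝ × ℝ³ => tildeProj q.1 q.2 := by
  have hb : Continuous bVec := by
    refine (PiLp.continuous_toLp 2 _).comp (continuous_pi fun i => ?_)
    fin_cases i <;> fun_prop
  simp only [tildeProj_eq]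
  fun_prop

theorem norm_tildeProj_sq (θ : ℝ) (w : ℝ³) :
    ‖tildeProj θ w‖ ^ 2 = ‖w‖ ^ 2 - ⟪w, bVec θ⟫ ^ 2 / 2 := by
  have hb : ‖bVec θ‖ ^ 2 = 2 := by rw [← real_inner_self_eq_norm_sq, inner_bVec_self]
  rw [tildeProj_eq, norm_sub_sq_real, real_inner_smul_right, norm_smul, mul_pow,
    Real.norm_eq_abs, sq_abs, hb]
  ring

theorem exists_abs_sin_sub_mul_norm_le_norm_tildeProj (w : ℝ³) :
    ∃ φ : ℝ, ∀ θ : ℝ, |Real.sin (θ - φ)| * ‖w‖ ≤ √2 * ‖tildeProj θ w‖ := by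
  set z : ℂ := ⟨w 0, w 1⟩
  refine ⟨z.arg, fun θ => ?_⟩
  have hw0 : w 0 = ‖z‖ * Real.cos z.arg := (Complex.norm_mul_cos_arg z).symm
  have hw1 : w 1 = ‖z‖ * Real.sin z.arg := (Complex.norm_mul_sin_arg z).symm
  have hinner : ⟪w, bVec θ⟫ = ‖z‖ * Real.cos (θ - z.arg) - w 2 := by
    rw [inner_bVec, hw0, hw1, Real.cos_sub]; ring
  have hnorm : ‖w‖ ^ 2 = ‖z‖ ^ 2 + w 2 ^ 2 := by
    rw [EuclideanSpace.norm_sq_eq, Fin.sum_univ_three, Complex.sq_norm, Complex.normSq_mk]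
    simp only [Real.norm_eq_abs, sq_abs]
    ring
  have hsq : (|Real.sin (θ - z.arg)| * ‖w‖) ^ 2 ≤ (√2 * ‖tildeProj θ w‖) ^ 2 := by
    rw [mul_pow, mul_pow, sq_abs, Real.sq_sqrt zero_le_two, norm_tildeProj_sq, hnorm, hinner]
    nlinarith [sq_nonneg (‖z‖ + Real.cos (θ - z.arg) * w 2), Real.sin_sq_add_cos_sq (θ - z.arg)]
  exact (pow_le_pow_iff_left₀ (by positivity) (by positivity) two_ne_zero).mp hsq

theorem lintegral_edist_tildeProj_rpow_neg_le {s : ℝ} (hs : 0 ≤ s) (x y : ℝ³) :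
    ∫⁻ θ in Ico 0 (2 * π), edist (tildeProj θ x) (tildeProj θ y) ^ (-s)
      ≤ ENNReal.ofReal √2 ^ s * (∫⁻ θ in Ico 0 (2 * π), ENNReal.ofReal |Real.sin θ| ^ (-s))
        * edist x y ^ (-s) := by
  obtain ⟨φ, hφ⟩ := exists_abs_sin_sub_mul_norm_le_norm_tildeProj (x - y)
  have hpoint (θ : ℝ) : edist (tildeProj θ x) (tildeProj θ y) ^ (-s)
      ≤ ENNReal.ofReal √2 ^ s * (ENNReal.ofReal |Real.sin (θ - φ)| ^ (-s) * edist x y ^ (-s)) := by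
    refine ENNReal.rpow_neg_le_of_mul_le hs ENNReal.ofReal_ne_top (edist_ne_top x y)
      (by simp) ENNReal.ofReal_ne_top (edist_ne_top _ _) ?_
    rw [edist_dist, edist_dist, dist_eq_norm, dist_eq_norm, tildeProj_sub,
      ← ENNReal.ofReal_mul (abs_nonneg _), ← ENNReal.ofReal_mul (by positivity)]
    exact ENNReal.ofReal_le_ofReal (hφ θ)
  calc ∫⁻ θ in Ico 0 (2 * π), edist (tildeProj θ x) (tildeProj θ y) ^ (-s)
      ≤ ∫⁻ θ in Ico 0 (2 * π), ENNReal.ofReal √2 ^ s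
          * (ENNReal.ofReal |Real.sin (θ - φ)| ^ (-s) * edist x y ^ (-s)) :=
        lintegral_mono hpoint
    _ = ENNReal.ofReal √2 ^ s
          * (∫⁻ θ in Ico 0 (2 * π), ENNReal.ofReal |Real.sin (θ - φ)| ^ (-s))
          * edist x y ^ (-s) := by
        rw [lintegral_const_mul' _ _ (ENNReal.rpow_ne_top_of_nonneg hs ENNReal.ofReal_ne_top),
          lintegral_mul_const _ (by fun_prop), mul_assoc]
    _ = _ := by rw [lintegral_abs_sin_sub_rpow_neg_eq]

theorem lintegral_Ico_projected_energy_le {s : ℝ} (hs : 0 ≤ s) (μ : Measure ℝ³) [SFinite μ] :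
    ∫⁻ θ in Ico 0 (2 * π), ∫⁻ x, ∫⁻ y, edist (tildeProj θ x) (tildeProj θ y) ^ (-s) ∂μ ∂μ
      ≤ ENNReal.ofReal √2 ^ s * (∫⁻ θ in Ico 0 (2 * π), ENNReal.ofReal |Real.sin θ| ^ (-s))
        * rieszEnergy s μ := by
  have hmeas : Measurable fun q : ℝ × (ℝ³ × ℝ³) =>
      edist (tildeProj q.1 q.2.1) (tildeProj q.1 q.2.2) ^ (-s) := by
    have := continuous_tildeProj
    fun_prop
  calc ∫⁻ θ in Ico 0 (2 * π), ∫⁻ x, ∫⁻ y, edist (tildeProj θ x) (tildeProj θ y) ^ (-s) ∂μ ∂μ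
      = ∫⁻ θ in Ico 0 (2 * π), ∫⁻ p : ℝ³ × ℝ³,
          edist (tildeProj θ p.1) (tildeProj θ p.2) ^ (-s) ∂(μ.prod μ) :=
        lintegral_congr fun θ =>
          (lintegral_prod _ (hmeas.comp measurable_prodMk_left).aemeasurable).symm
    _ = ∫⁻ p : ℝ³ × ℝ³, ∫⁻ θ in Ico 0 (2 * π),
          edist (tildeProj θ p.1) (tildeProj θ p.2) ^ (-s) ∂volume ∂(μ.prod μ) :=
        lintegral_lintegral_swap hmeas.aemeasurable
    _ ≤ ∫⁻ p : ℝ³ × ℝ³, ENNReal.ofReal √2 ^ s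
          * (∫⁻ θ in Ico 0 (2 * π), ENNReal.ofReal |Real.sin θ| ^ (-s))
          * edist p.1 p.2 ^ (-s) ∂(μ.prod μ) :=
        lintegral_mono fun p => lintegral_edist_tildeProj_rpow_neg_le hs p.1 p.2
    _ = _ := by
        rw [lintegral_const_mul'' _ (by fun_prop), rieszEnergy, lintegral_prod _ (by fun_prop)]

theorem integrated_projected_energy_finite_general (s : ℝ) (hs : 1/2 < s) (hs' : s < 1)
    (μ : Measure (EuclideanSpace ℝ (Fin 3))) [IsProbabilityMeasure μ]
    (hI : rieszEnergy s μ < ⊤) :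
    (∫⁻ θ in Set.Ico 0 (2 * π),
      ∫⁻ x, ∫⁻ y, edist (tildeProj θ x) (tildeProj θ y) ^ (-s) ∂μ ∂μ ∂volume) < ⊤ := by
  have hs₀ : 0 ≤ s := by linarith
  refine (lintegral_Ico_projected_energy_le hs₀ μ).trans_lt (ENNReal.mul_lt_top ?_ hI)
  exact ENNReal.mul_lt_top (ENNReal.rpow_lt_top_of_nonneg hs₀ ENNReal.ofReal_ne_top)
    (lintegral_abs_sin_rpow_neg_lt_top hs₀ hs')

/-- Equation (3.9): if `1/2 < s < 1` and `μ` is a compactly supported probability measure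
on `ℝ³` with finite `s`-energy, then `∫₀^{2π} I_s(π̃_{θ#}μ) dθ < ∞`. -/
theorem integrated_projected_energy_finite (s : ℝ) (hs : 1/2 < s) (hs' : s < 1)
    (μ : Measure (EuclideanSpace ℝ (Fin 3))) [IsProbabilityMeasure μ]
    (hsupp : μ (Metric.closedBall (0 : EuclideanSpace ℝ (Fin 3)) 1)ᶜ = 0)
    (hI : rieszEnergy s μ < ⊤) :
    (∫⁻ θ in Set.Ico 0 (2 * π),
      ∫⁻ x, ∫⁻ y, edist (tildeProj θ x) (tildeProj θ y) ^ (-s) ∂μ ∂μ ∂volume) < ⊤ :=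
  integrated_projected_energy_finite_general s hs hs' μ hI
end

section
/- Let γ(θ) = (cos θ, sin θ, 1)/√2, b_θ = span((cos θ, sin θ, −1)), and let π̃_θ be the orthogonal projection of ℝ³ onto the plane Ṽ_θ = b_θ^⊥. There exist constants C > 0 and λ₀ > 0 such that for every unit vector x ∈ S² ⊂ ℝ³ and every 0 < λ < λ₀, the Lebesgue measure of the set {θ ∈ [0, 2π) : |π̃_θ(x)| ≤ λ} is at most C·λ. -/
/-! Writing `x = (r cos φ, r sin φ, d)` with `r² + d² = 1`, one has
`‖π̃_θ x‖² = 1 - (r cos (θ - φ) - d)² / 2`, and Cauchy–Schwarz bounds `(r cos (θ - φ) - d)²` by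
`1 + cos² (θ - φ)`; hence `|sin (θ - φ)| ≤ √2 ‖π̃_θ x‖`. So the sublevel set lies within
`πλ/√2` of the points `φ + kπ`, of which only five can be close to `[0, 2π)`. -/

open Set Metric MeasureTheory Real
open scoped RealInnerProductSpace ENNReal

lemma norm_sub_lineProj_sq (v x : EuclideanSpace ℝ (Fin 3)) (hv : v ≠ 0) :
    ‖x - lineProj v x‖ ^ 2 = ‖x‖ ^ 2 - ⟪x, v⟫ ^ 2 / ‖v‖ ^ 2 := by
  have hv' : ‖v‖ ≠ 0 := norm_ne_zero_iff.mpr hv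
  rw [lineProj, norm_sub_sq_real, inner_smul_right, norm_smul, real_inner_self_eq_norm_sq,
    Real.norm_eq_abs, mul_pow, sq_abs]
  field_simp
  ring

lemma inner_bVec_s8 (θ : ℝ) (x : EuclideanSpace ℝ (Fin 3)) :
    ⟪x, bVec θ⟫ = x 0 * cos θ + x 1 * sin θ - x 2 := by
  simp [bVec, e3, PiLp.inner_apply, Fin.sum_univ_three]
  ring

lemma norm_bVec_sq (θ : ℝ) : ‖bVec θ‖ ^ 2 = 2 := by
  rw [← real_inner_self_eq_norm_sq, inner_bVec_s8]
  simp [bVec, e3]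
  nlinarith [sin_sq_add_cos_sq θ]

lemma norm_tildeProj_sq_s8 (θ : ℝ) (x : EuclideanSpace ℝ (Fin 3)) :
    ‖tildeProj θ x‖ ^ 2 = ‖x‖ ^ 2 - (x 0 * cos θ + x 1 * sin θ - x 2) ^ 2 / 2 := by
  have hb : bVec θ ≠ 0 := by
    intro h
    simpa [h] using norm_bVec_sq θ
  rw [tildeProj, norm_sub_lineProj_sq _ _ hb, inner_bVec_s8, norm_bVec_sq]

lemma norm_sq_eq_sum_three (x : EuclideanSpace ℝ (Fin 3)) :
    ‖x‖ ^ 2 = x 0 ^ 2 + x 1 ^ 2 + x 2 ^ 2 := by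
  simp [EuclideanSpace.norm_sq_eq, Fin.sum_univ_three]

lemma abs_sin_sub_le_sqrt_two_mul_norm_tildeProj {x : EuclideanSpace ℝ (Fin 3)} (hx : ‖x‖ = 1)
    {r φ : ℝ} (h0 : x 0 = r * cos φ) (h1 : x 1 = r * sin φ) (θ : ℝ) :
    |sin (θ - φ)| ≤ √2 * ‖tildeProj θ x‖ := by
  rw [← sq_le_sq₀ (abs_nonneg _) (by positivity), sq_abs, mul_pow, sq_sqrt zero_le_two]
  have hsum := norm_sq_eq_sum_three x
  rw [hx, h0, h1] at hsum
  have hr : r ^ 2 + x 2 ^ 2 = 1 := by nlinarith [sin_sq_add_cos_sq φ]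
  have hf : x 0 * cos θ + x 1 * sin θ - x 2 = r * cos (θ - φ) - x 2 := by
    rw [h0, h1, cos_sub]; ring
  rw [norm_tildeProj_sq_s8, hx, hf]
  nlinarith [sq_nonneg (r + x 2 * cos (θ - φ)), sin_sq_add_cos_sq (θ - φ)]

lemma exists_polar (a b : ℝ) : ∃ r φ, φ ∈ Ioc (-π) π ∧ a = r * cos φ ∧ b = r * sin φ :=
  ⟨‖(⟨a, b⟩ : ℂ)‖, Complex.arg ⟨a, b⟩, Complex.arg_mem_Ioc _,
    (Complex.norm_mul_cos_arg ⟨a, b⟩).symm, (Complex.norm_mul_sin_arg ⟨a, b⟩).symm⟩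

lemma exists_int_abs_sub_mul_pi_le (s : ℝ) :
    ∃ k : ℤ, |s - k * π| ≤ π / 2 ∧ |s - k * π| ≤ π / 2 * |sin s| := by
  obtain ⟨k, hk⟩ : ∃ k : ℤ, |s - k * π| ≤ π / 2 := by
    refine ⟨round (s / π), ?_⟩
    have h := abs_sub_round (s / π)
    calc |s - round (s / π) * π| = |s / π - round (s / π)| * π := by
          rw [← abs_of_pos pi_pos, ← abs_mul, abs_of_pos pi_pos, sub_mul,
            div_mul_cancel₀ _ pi_ne_zero]
      _ ≤ 1 / 2 * π := by gcongr
      _ = π / 2 := by ring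
  refine ⟨k, hk, ?_⟩
  have hj := mul_abs_le_abs_sin hk
  rw [sin_sub_int_mul_pi, abs_mul, abs_neg_one_zpow, one_mul, div_mul_eq_mul_div,
    div_le_iff₀ pi_pos] at hj
  linarith

lemma volume_setOf_abs_sin_sub_le {φ : ℝ} (hφ : φ ∈ Icc (-π) π) (ε : ℝ) :
    volume {θ ∈ Ico 0 (2 * π) | |sin (θ - φ)| ≤ ε} ≤ ENNReal.ofReal (5 * π * ε) := by
  have hcover : {θ ∈ Ico 0 (2 * π) | |sin (θ - φ)| ≤ ε} ⊆
      ⋃ k ∈ Finset.Icc (-1 : ℤ) 3, Icc (φ + k * π - π / 2 * ε) (φ + k * π + π / 2 * ε) := by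
    rintro θ ⟨⟨hθ0, hθ1⟩, hθε⟩
    obtain ⟨k, hk, hkε⟩ := exists_int_abs_sub_mul_pi_le (θ - φ)
    rw [abs_le] at hk
    have hk1 : (-2 : ℤ) < k := by
      have : (-2 : ℝ) < k := by nlinarith [pi_pos, hφ.2]
      exact_mod_cast this
    have hk2 : k < 4 := by
      have : (k : ℝ) < 4 := by nlinarith [pi_pos, hφ.1]
      exact_mod_cast this
    have hδ : |θ - φ - k * π| ≤ π / 2 * ε := hkε.trans (by gcongr)
    rw [abs_le] at hδ
    simp only [mem_iUnion, Finset.mem_Icc]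
    exact ⟨k, ⟨by omega, by omega⟩, by constructor <;> linarith⟩
  calc volume {θ ∈ Ico 0 (2 * π) | |sin (θ - φ)| ≤ ε}
      ≤ ∑ k ∈ Finset.Icc (-1 : ℤ) 3,
          volume (Icc (φ + k * π - π / 2 * ε) (φ + k * π + π / 2 * ε)) :=
        (measure_mono hcover).trans (measure_biUnion_finset_le _ _)
    _ = ∑ _k ∈ Finset.Icc (-1 : ℤ) 3, ENNReal.ofReal (π * ε) := by
        refine Finset.sum_congr rfl fun k _ => ?_
        rw [Real.volume_Icc]
        ring_nf
    _ = ENNReal.ofReal (5 * π * ε) := by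
        rw [Finset.sum_const, Int.card_Icc, nsmul_eq_mul, mul_assoc,
          ENNReal.ofReal_mul (by norm_num : (0 : ℝ) ≤ 5)]
        simp

/-- Sublevel estimate for the projections `π̃_θ`: for every unit vector `x ∈ S²` and all
sufficiently small `λ > 0`, the set `{θ ∈ [0, 2π) : |π̃_θ(x)| ≤ λ}` has measure `≲ λ`. -/
theorem sublevel_estimate_tildeProj :
    ∃ C : ℝ, 0 < C ∧ ∃ lam₀ : ℝ, 0 < lam₀ ∧
      ∀ x : EuclideanSpace ℝ (Fin 3), ‖x‖ = 1 →
      ∀ lam : ℝ, 0 < lam → lam < lam₀ →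
        volume {θ ∈ Set.Ico 0 (2 * π) | ‖tildeProj θ x‖ ≤ lam} ≤
          ENNReal.ofReal (C * lam) := by
  refine ⟨5 * π * √2, by positivity, 1, one_pos, fun x hx lam _ _ => ?_⟩
  obtain ⟨r, φ, hφ, h0, h1⟩ := exists_polar (x 0) (x 1)
  calc volume {θ ∈ Set.Ico 0 (2 * π) | ‖tildeProj θ x‖ ≤ lam}
      ≤ volume {θ ∈ Ico 0 (2 * π) | |sin (θ - φ)| ≤ √2 * lam} :=
        measure_mono fun θ ⟨hθ, hle⟩ =>
          ⟨hθ, (abs_sin_sub_le_sqrt_two_mul_norm_tildeProj hx h0 h1 θ).trans (by gcongr)⟩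
    _ ≤ ENNReal.ofReal (5 * π * (√2 * lam)) :=
        volume_setOf_abs_sin_sub_le (Ioc_subset_Icc_self hφ) _
    _ = ENNReal.ofReal (5 * π * √2 * lam) := by ring_nf
end

section
/- There exists c₀ > 0 such that for every 0 < c ≤ c₀ there is δ₀ > 0 with the following property for all 0 < δ < δ₀. Let C = {(x, y, z) ∈ ℝ³ : x² + y² = z²} and let p ∈ B(0,1) be a point with |p| ≥ δ^c and dist(p, C) ≤ δ^{1/4}. Then the intersection C(δ) ∩ (p + C(δ)) ∩ B(0,1) is contained in the δ^c-neighbourhood of a single line on C. -/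
open Set Metric MeasureTheory
open scoped ENNReal

/-- The standard cone `C = {(x, y, z) : x² + y² = z²}` in `ℝ³`. -/
def stdCone : Set (EuclideanSpace ℝ (Fin 3)) :=
  {v | v 0 ^ 2 + v 1 ^ 2 = v 2 ^ 2}

/-- The closed `δ`-neighbourhood of a set `A ⊂ ℝ³`. -/
def nbhd (A : Set (EuclideanSpace ℝ (Fin 3))) (δ : ℝ) : Set (EuclideanSpace ℝ (Fin 3)) :=
  {x | Metric.infDist x A ≤ δ}

/-- The line spanned by `v`, as a subset of `ℝ³`. -/
def lineSpan (v : EuclideanSpace ℝ (Fin 3)) : Set (EuclideanSpace ℝ (Fin 3)) :=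
  ((Submodule.span ℝ {v} : Submodule ℝ (EuclideanSpace ℝ (Fin 3))) :
    Set (EuclideanSpace ℝ (Fin 3)))

/-!
The cone is the null set of the Lorentz form `B(u, v) = u₀v₀ + u₁v₁ - u₂v₂`. If `x` lies within
`δ` of `C` and of `p + C`, pick `a, b, q ∈ C` close to `x`, `x - p`, `p`; then `a - b - q` is
`O(δ^{1/4})`, and expanding `B(b, b) = 0` shows that `B(a, q)` is `O(δ^{1/4})` too. For null
vectors, `‖q₂ a - a₂ q‖² = -2 q₂ a₂ B(a, q)`, hence `a` lies within `O(δ^{1/8} / ‖q‖^{1/2})`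
of the line `ℝq`, which is `≤ δ^c / 2` once `‖q‖ ≳ δ^c` and `c` is small.
-/

namespace StdCone

local notation "E³" => EuclideanSpace ℝ (Fin 3)

def lorentz (u v : E³) : ℝ :=
  u 0 * v 0 + u 1 * v 1 - u 2 * v 2

lemma mem_stdCone {v : E³} : v ∈ stdCone ↔ v 0 ^ 2 + v 1 ^ 2 = v 2 ^ 2 := Iff.rfl

lemma norm_sq_eq (v : E³) : ‖v‖ ^ 2 = v 0 ^ 2 + v 1 ^ 2 + v 2 ^ 2 := by
  simp only [EuclideanSpace.norm_sq_eq, Fin.sum_univ_three, Real.norm_eq_abs, sq_abs]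

lemma abs_lorentz_le (u v : E³) : |lorentz u v| ≤ ‖u‖ * ‖v‖ := by
  refine abs_le_of_sq_le_sq' ?_ (by positivity) |> abs_le.mpr
  rw [mul_pow, norm_sq_eq, norm_sq_eq, lorentz]
  nlinarith [sq_nonneg (u 0 * v 1 - u 1 * v 0), sq_nonneg (u 0 * v 2 + u 2 * v 0),
    sq_nonneg (u 1 * v 2 + u 2 * v 1)]

lemma isClosed_stdCone : IsClosed stdCone :=
  isClosed_eq (by fun_prop) (by fun_prop)

lemma exists_mem_stdCone_norm_sub_le {x : E³} {δ : ℝ} (h : infDist x stdCone ≤ δ) :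
    ∃ a ∈ stdCone, ‖x - a‖ ≤ δ := by
  obtain ⟨a, ha, hxa⟩ := isClosed_stdCone.exists_infDist_eq_dist ⟨0, by simp [stdCone]⟩ x
  exact ⟨a, ha, by rwa [← dist_eq_norm, ← hxa]⟩

lemma norm_sq_eq_of_mem_stdCone {q : E³} (hq : q ∈ stdCone) : ‖q‖ ^ 2 = 2 * q 2 ^ 2 := by
  rw [norm_sq_eq, mem_stdCone.mp hq]; ring

/-- The vector `q₂ a - a₂ q` lies in the plane `z = 0`, where the norm is the Lorentz length. -/
lemma norm_sq_smul_sub_smul {a q : E³} (ha : a ∈ stdCone) (hq : q ∈ stdCone) :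
    ‖q 2 • a - a 2 • q‖ ^ 2 = -2 * q 2 * a 2 * lorentz a q := by
  rw [norm_sq_eq]
  simp only [PiLp.sub_apply, PiLp.smul_apply, smul_eq_mul, lorentz]
  linear_combination q 2 ^ 2 * mem_stdCone.mp ha + a 2 ^ 2 * mem_stdCone.mp hq

lemma infDist_lineSpan_sq_mul_norm_le {a q : E³} (ha : a ∈ stdCone) (hq : q ∈ stdCone) :
    infDist a (lineSpan q) ^ 2 * ‖q‖ ≤ 4 * ‖a‖ * |lorentz a q| := by
  obtain hq₂ | hq₂ := eq_or_ne (q 2) 0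
  · have hq0 : ‖q‖ = 0 := by simpa [hq₂] using norm_sq_eq_of_mem_stdCone hq
    rw [hq0, mul_zero]
    positivity
  set D := infDist a (lineSpan q)
  have hD : D * |q 2| ≤ ‖q 2 • a - a 2 • q‖ := by
    have hmem : (a 2 / q 2) • q ∈ lineSpan q :=
      Submodule.smul_mem _ _ (Submodule.mem_span_singleton_self q)
    calc D * |q 2| ≤ |q 2| * ‖a - (a 2 / q 2) • q‖ := by
          rw [mul_comm, ← dist_eq_norm]
          gcongr
          exact infDist_le_dist_of_mem hmem
      _ = ‖q 2 • a - a 2 • q‖ := by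
          rw [← Real.norm_eq_abs, ← norm_smul, smul_sub, smul_smul, mul_div_cancel₀ _ hq₂]
  have hD_sq : (D * |q 2|) ^ 2 ≤ 2 * |q 2| * (‖a‖ * |lorentz a q|) :=
    calc (D * |q 2|) ^ 2 ≤ ‖q 2 • a - a 2 • q‖ ^ 2 :=
          pow_le_pow_left₀ (mul_nonneg infDist_nonneg (abs_nonneg _)) hD 2
      _ = -2 * q 2 * a 2 * lorentz a q := norm_sq_smul_sub_smul ha hq
      _ ≤ 2 * |q 2| * (|a 2| * |lorentz a q|) := by
          have := neg_abs_le (q 2 * a 2 * lorentz a q)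
          rw [abs_mul, abs_mul] at this
          linarith
      _ ≤ 2 * |q 2| * (‖a‖ * |lorentz a q|) := by
          gcongr
          exact PiLp.norm_apply_le a 2
  have hq_le : ‖q‖ ≤ 2 * |q 2| := by
    refine abs_le_of_sq_le_sq' ?_ (by positivity) |>.2
    rw [norm_sq_eq_of_mem_stdCone hq, mul_pow, sq_abs]
    nlinarith [sq_nonneg (q 2)]
  have hq₂_pos : 0 < |q 2| := abs_pos.mpr hq₂
  nlinarith [sq_nonneg D, mul_le_mul_of_nonneg_left hq_le (sq_nonneg D)]

lemma abs_lorentz_le_of_mem_stdCone {a b q : E³} (ha : a ∈ stdCone) (hb : b ∈ stdCone)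
    (hq : q ∈ stdCone) :
    |lorentz a q| ≤ (‖a‖ + ‖q‖ + ‖a - b - q‖) * ‖a - b - q‖ := by
  have key : 2 * lorentz a q =
      lorentz (a - b - q) (a - b - q) - 2 * lorentz a (a - b - q) + 2 * lorentz q (a - b - q) := by
    simp only [lorentz, PiLp.sub_apply]
    linear_combination mem_stdCone.mp ha + mem_stdCone.mp hq - mem_stdCone.mp hb
  have h₁ := abs_lorentz_le (a - b - q) (a - b - q)
  have h₂ := abs_lorentz_le a (a - b - q)
  have h₃ := abs_lorentz_le q (a - b - q)
  rw [abs_le] at h₁ h₂ h₃ ⊢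
  constructor <;> nlinarith [norm_nonneg (a - b - q)]

lemma exists_lineSpan_of_scales {p : E³} {δ ε r : ℝ} (hr : 0 < r) (hδε : δ ≤ ε)
    (hεr : 2000 * ε ≤ r ^ 3) (hp : ‖p‖ ≤ 1) (hpr : r ≤ ‖p‖) (hpC : infDist p stdCone ≤ ε) :
    ∃ v, v ≠ 0 ∧ v ∈ stdCone ∧
      nbhd stdCone δ ∩ {x | x - p ∈ nbhd stdCone δ} ∩ closedBall 0 1 ⊆ nbhd (lineSpan v) r := by
  have hε : ε ≤ r / 2000 := by
    have := pow_le_pow_of_le_one hr.le (hpr.trans hp) (show 1 ≤ 3 by norm_num)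
    linarith [pow_one r]
  obtain ⟨q, hq, hpq⟩ := exists_mem_stdCone_norm_sub_le hpC
  have hq_lower : r / 2 ≤ ‖q‖ := by linarith [norm_sub_norm_le p q]
  have hq_upper : ‖q‖ ≤ 2 := by linarith [norm_sub_norm_le q p, norm_sub_rev p q]
  refine ⟨q, norm_pos_iff.mp (by linarith), hq, ?_⟩
  rintro x ⟨⟨hxC, hxpC⟩, hx⟩
  obtain ⟨a, ha, hxa⟩ := exists_mem_stdCone_norm_sub_le hxC
  obtain ⟨b, hb, hxpb⟩ := exists_mem_stdCone_norm_sub_le hxpC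
  have ha_upper : ‖a‖ ≤ 2 := by
    linarith [norm_sub_norm_le a x, norm_sub_rev x a, mem_closedBall_zero_iff.mp hx]
  have hd : ‖a - b - q‖ ≤ 3 * ε :=
    calc ‖a - b - q‖ = ‖(x - p - b) - (x - a) + (p - q)‖ := by congr 1; abel
      _ ≤ ‖x - p - b‖ + ‖x - a‖ + ‖p - q‖ := norm_add_le_of_le (norm_sub_le _ _) le_rfl
      _ ≤ 3 * ε := by linarith
  have hB : |lorentz a q| ≤ 21 * ε := by
    have := abs_lorentz_le_of_mem_stdCone ha hb hq
    nlinarith [norm_nonneg (a - b - q)]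
  have haq : infDist a (lineSpan q) ≤ r / 2 := by
    have hsq : infDist a (lineSpan q) ^ 2 * (r / 2) ≤ (r / 2) ^ 2 * (r / 2) := by
      nlinarith [infDist_lineSpan_sq_mul_norm_le ha hq, sq_nonneg (infDist a (lineSpan q)),
        abs_nonneg (lorentz a q), norm_nonneg a]
    exact (pow_le_pow_iff_left₀ infDist_nonneg (by positivity) two_ne_zero).mp
      (le_of_mul_le_mul_right hsq (by positivity))
  calc infDist x (lineSpan q) ≤ infDist a (lineSpan q) + dist x a := infDist_le_infDist_add_dist
    _ ≤ r := by rw [dist_eq_norm]; linarith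

end StdCone

/-- Proposition B.2: if `p ∈ B(0,1)` lies within `δ^{1/4}` of the cone `C` and
`|p| ≥ δ^c`, then `C(δ) ∩ (p + C(δ)) ∩ B(0,1)` is contained in the `δ^c`-neighbourhood
of a single line on `C`. -/
theorem two_cones_near_cone :
    ∃ c₀ : ℝ, 0 < c₀ ∧ ∀ c : ℝ, 0 < c → c ≤ c₀ →
      ∃ δ₀ : ℝ, 0 < δ₀ ∧ ∀ δ : ℝ, 0 < δ → δ < δ₀ →
      ∀ p : EuclideanSpace ℝ (Fin 3),
        p ∈ Metric.closedBall (0 : EuclideanSpace ℝ (Fin 3)) 1 →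
        δ ^ c ≤ ‖p‖ → Metric.infDist p stdCone ≤ δ ^ (1/4 : ℝ) →
        ∃ v : EuclideanSpace ℝ (Fin 3), v ≠ 0 ∧ v ∈ stdCone ∧
          nbhd stdCone δ ∩ {x | x - p ∈ nbhd stdCone δ} ∩ Metric.closedBall 0 1 ⊆
            nbhd (lineSpan v) (δ ^ c) := by
  refine ⟨1/16, by norm_num, fun c _ hc => ⟨(1/2000) ^ 16, by norm_num,
    fun δ hδ hδ₀ p hp hpr hpC => ?_⟩⟩
  have hδ1 : δ ≤ 1 := hδ₀.le.trans (by norm_num)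
  have hroot : δ ^ (1/16 : ℝ) ≤ 1/2000 := by
    have h := Real.rpow_le_rpow hδ.le hδ₀.le
      (show (0 : ℝ) ≤ ((16 : ℕ) : ℝ)⁻¹ by norm_num)
    rwa [Real.pow_rpow_inv_natCast (by norm_num) (by norm_num), Nat.cast_ofNat,
      ← one_div] at h
  have hgain (α β : ℝ) (h : β + 1/16 ≤ α) : 2000 * δ ^ α ≤ δ ^ β :=
    calc 2000 * δ ^ α ≤ 2000 * (δ ^ β * δ ^ (1/16 : ℝ)) := by
          rw [← Real.rpow_add hδ]
          gcongr 2000 * ?_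
          exact Real.rpow_le_rpow_of_exponent_ge hδ hδ1 h
      _ ≤ δ ^ β := by nlinarith [Real.rpow_pos_of_pos hδ β]
  refine StdCone.exists_lineSpan_of_scales (Real.rpow_pos_of_pos hδ c) ?_ ?_
    (mem_closedBall_zero_iff.mp hp) hpr hpC
  · simpa using Real.rpow_le_rpow_of_exponent_ge hδ hδ1 (show (1/4 : ℝ) ≤ 1 by norm_num)
  · rw [← Real.rpow_mul_natCast hδ.le]
    exact hgain _ _ (by push_cast; linarith)
end

section
/- There exists an absolute constant R ≥ 1 such that the following holds. Let C = {(x, y, z) ∈ ℝ³ : x² + y² = z²}, let 0 < c < 1 and 0 < δ < 1, and let p = (p₁, p₂, p₃) ∈ B(0,1) with |p| ≥ δ^c. Then the intersection C(δ) ∩ (p + C(δ)) ∩ B(0,1) is contained in the closed R·δ^{1−c}-neighbourhood of the plane V_p = {w ∈ ℝ³ : (w − p/2) · (p₁, p₂, −p₃) = 0}. -/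
open Set Metric
open scoped RealInnerProductSpace

/-- The plane `V_p = {w : (w - p/2) · (p₁, p₂, -p₃) = 0}`. -/
noncomputable def Vplane (p : EuclideanSpace ℝ (Fin 3)) : Set (EuclideanSpace ℝ (Fin 3)) :=
  {w | ⟪w - (1/2 : ℝ) • p, e3 (p 0) (p 1) (-(p 2))⟫ = 0}

/-!
The cone is the null set of the Minkowski form `B(u, v) = u₀v₀ + u₁v₁ - u₂v₂`, and
`|B(u, v)| ≤ ‖u‖‖v‖`. Writing `Q(v) = B(v, v)`, the identity `Q(u) - Q(v) = B(u - v, u + v)`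
shows that `|Q| ≲ δ` on the bounded part of `C(δ)`. For `x ∈ C(δ) ∩ (p + C(δ))` the difference
`Q(x) - Q(x - p) = 2 B(x - p/2, p)` is thus `O(δ)`, and `B(x - p/2, p) / ‖p‖` is, up to sign, the
distance from `x` to `V_p`, whose Euclidean normal `(p₁, p₂, -p₃)` has length `‖p‖ ≥ δ^c`.
-/

lemma Metric.infDist_le_abs_inner_div_norm {E : Type*} [NormedAddCommGroup E]
    [InnerProductSpace ℝ E] (x a : E) {n : E} (hn : n ≠ 0) :
    infDist x {w | ⟪w - a, n⟫ = 0} ≤ |⟪x - a, n⟫| / ‖n‖ := by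
  have hn' : 0 < ‖n‖ := norm_pos_iff.mpr hn
  set t := ⟪x - a, n⟫ / ‖n‖ ^ 2
  have hmem : x - t • n ∈ {w | ⟪w - a, n⟫ = 0} := by
    show ⟪x - t • n - a, n⟫ = 0
    rw [sub_right_comm, inner_sub_left, real_inner_smul_left, real_inner_self_eq_norm_sq,
      div_mul_cancel₀ _ (pow_ne_zero 2 hn'.ne'), sub_self]
  calc infDist x {w | ⟪w - a, n⟫ = 0} ≤ dist x (x - t • n) := infDist_le_dist_of_mem hmem
    _ = |⟪x - a, n⟫| / ‖n‖ := by
      rw [dist_eq_norm, sub_sub_cancel, norm_smul, Real.norm_eq_abs, abs_div,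
        abs_of_pos (by positivity : (0 : ℝ) < ‖n‖ ^ 2)]
      field_simp

lemma inner_e3 (v : EuclideanSpace ℝ (Fin 3)) (a b c : ℝ) :
    ⟪v, e3 a b c⟫ = v 0 * a + v 1 * b + v 2 * c := by
  simp [PiLp.inner_apply, Fin.sum_univ_three, e3]
  ring

lemma norm_e3_neg_last (v : EuclideanSpace ℝ (Fin 3)) : ‖e3 (v 0) (v 1) (-(v 2))‖ = ‖v‖ := by
  simp [EuclideanSpace.norm_eq, Fin.sum_univ_three, e3]

noncomputable def minkowski (u v : EuclideanSpace ℝ (Fin 3)) : ℝ :=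
  ⟪u, e3 (v 0) (v 1) (-(v 2))⟫

lemma minkowski_apply (u v : EuclideanSpace ℝ (Fin 3)) :
    minkowski u v = u 0 * v 0 + u 1 * v 1 - u 2 * v 2 := by
  rw [minkowski, inner_e3]
  ring

lemma abs_minkowski_le (u v : EuclideanSpace ℝ (Fin 3)) : |minkowski u v| ≤ ‖u‖ * ‖v‖ :=
  (abs_real_inner_le_norm _ _).trans_eq (by rw [norm_e3_neg_last])

lemma minkowski_self_sub_minkowski_self (u v : EuclideanSpace ℝ (Fin 3)) :
    minkowski u u - minkowski v v = minkowski (u - v) (u + v) := by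
  simp only [minkowski_apply, PiLp.sub_apply, PiLp.add_apply]
  ring

lemma minkowski_self_sub_minkowski_self_sub (x p : EuclideanSpace ℝ (Fin 3)) :
    minkowski x x - minkowski (x - p) (x - p) = 2 * minkowski (x - (1/2 : ℝ) • p) p := by
  simp only [minkowski_apply, PiLp.sub_apply, PiLp.smul_apply, smul_eq_mul]
  ring

lemma stdCone_eq : stdCone = {v | minkowski v v = 0} := by
  ext v
  simp only [stdCone, mem_ofPred_eq, minkowski_apply]
  constructor <;> intro h <;> linarith

lemma isClosed_stdCone : IsClosed stdCone :=
  isClosed_eq (by fun_prop) (by fun_prop)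

lemma abs_minkowski_self_le_of_infDist_le {x : EuclideanSpace ℝ (Fin 3)} {δ : ℝ}
    (hx : infDist x stdCone ≤ δ) : |minkowski x x| ≤ δ * (2 * ‖x‖ + δ) := by
  obtain ⟨y, hyC, hy⟩ := isClosed_stdCone.exists_infDist_eq_dist ⟨0, by simp [stdCone]⟩ x
  have hyC : minkowski y y = 0 := by rwa [stdCone_eq] at hyC
  have hxy : ‖x - y‖ ≤ δ := by rwa [← dist_eq_norm, ← hy]
  have hxy' : ‖x + y‖ ≤ 2 * ‖x‖ + δ :=
    calc ‖x + y‖ = ‖(x + x) - (x - y)‖ := by congr 1; abel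
      _ ≤ ‖x‖ + ‖x‖ + ‖x - y‖ := (norm_sub_le _ _).trans (by gcongr; exact norm_add_le _ _)
      _ ≤ 2 * ‖x‖ + δ := by linarith
  calc |minkowski x x| = |minkowski (x - y) (x + y)| := by
        rw [← minkowski_self_sub_minkowski_self, hyC, sub_zero]
    _ ≤ ‖x - y‖ * ‖x + y‖ := abs_minkowski_le _ _
    _ ≤ δ * (2 * ‖x‖ + δ) := mul_le_mul hxy hxy' (norm_nonneg _) ((norm_nonneg _).trans hxy)

lemma infDist_Vplane_le (x : EuclideanSpace ℝ (Fin 3)) {p : EuclideanSpace ℝ (Fin 3)}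
    (hp : p ≠ 0) : infDist x (Vplane p) ≤ |minkowski (x - (1/2 : ℝ) • p) p| / ‖p‖ := by
  have hn : e3 (p 0) (p 1) (-(p 2)) ≠ 0 := by
    rw [← norm_ne_zero_iff, norm_e3_neg_last]
    exact norm_ne_zero_iff.mpr hp
  simpa only [Vplane, minkowski, norm_e3_neg_last] using infDist_le_abs_inner_div_norm x _ hn

/-- Proposition B.4: there is an absolute constant `R ≥ 1` such that
`C(δ) ∩ (p + C(δ)) ∩ B(0,1)` is contained in the `R·δ^{1-c}`-neighbourhood
of the plane `V_p`, whenever `p ∈ B(0,1)` and `|p| ≥ δ^c`. -/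
theorem cones_intersection_near_plane :
    ∃ R : ℝ, 1 ≤ R ∧
      ∀ c δ : ℝ, 0 < c → c < 1 → 0 < δ → δ < 1 →
      ∀ p : EuclideanSpace ℝ (Fin 3),
        p ∈ Metric.closedBall (0 : EuclideanSpace ℝ (Fin 3)) 1 → δ ^ c ≤ ‖p‖ →
        nbhd stdCone δ ∩ {x | x - p ∈ nbhd stdCone δ} ∩ Metric.closedBall 0 1 ⊆
          nbhd (Vplane p) (R * δ ^ (1 - c)) := by
  refine ⟨4, by norm_num, ?_⟩
  rintro c δ - - hδ hδ1 p hp hpδ x ⟨⟨hx, hxp⟩, hx1⟩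
  have hx1 : ‖x‖ ≤ 1 := by simpa using hx1
  have hxp1 : ‖x - p‖ ≤ 2 := (norm_sub_le x p).trans (by linarith [mem_closedBall_zero_iff.mp hp])
  have hδc : 0 < δ ^ c := Real.rpow_pos_of_pos hδ c
  have hQx := abs_minkowski_self_le_of_infDist_le hx
  have hQxp := abs_minkowski_self_le_of_infDist_le hxp
  have hB : |minkowski (x - (1/2 : ℝ) • p) p| ≤ 4 * δ := by
    have h := minkowski_self_sub_minkowski_self_sub x p
    rw [abs_le] at hQx hQxp ⊢
    constructor <;> nlinarith
  show infDist x (Vplane p) ≤ 4 * δ ^ (1 - c)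
  calc infDist x (Vplane p) ≤ |minkowski (x - (1/2 : ℝ) • p) p| / ‖p‖ :=
        infDist_Vplane_le x (norm_pos_iff.mp (hδc.trans_le hpδ))
    _ ≤ 4 * δ / δ ^ c := div_le_div₀ (by positivity) hB hδc hpδ
    _ = 4 * δ ^ (1 - c) := by rw [Real.rpow_sub hδ, Real.rpow_one]; ring
end

section
/- Fix τ ∈ (1/2, 1) and R ≥ 1. There exists c₀ > 0 such that for every 0 < c ≤ c₀ there is δ₀ > 0 with the following property for all 0 < δ < δ₀. Let C = {(x, y, z) ∈ ℝ³ : x² + y² = z²} and let p, q ∈ B(0,1) satisfy min{|p|, |q|, |p − q|} ≥ δ^c, dist(p, C) ≥ δ^{1/4}, dist(q, C) ≥ δ^{1/4}, and dist(p, span(q)) ≤ δ^τ. Then V_p(R·δ^{1−c}) ∩ V_q(R·δ^{1−c}) ∩ B(0,1) = ∅; in particular C(δ) ∩ (p + C(δ)) ∩ (q + C(δ)) ∩ B(0,1) = ∅ whenever C(δ) ∩ (p + C(δ)) ⊂ V_p(R·δ^{1−c}) and C(δ) ∩ (q + C(δ)) ⊂ V_q(R·δ^{1−c}) inside B(0,1).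 -/
open Set Metric
open scoped RealInnerProductSpace

/-! Write `Q(u, v) = u₀v₀ + u₁v₁ - u₂v₂ = ⟪u, J v⟫` with `J` the reflection `z ↦ -z`, so that
`V_p = {w : Q(w - p/2, p) = 0}` and `|Q(u, v)| ≤ ‖u‖‖v‖`. Write `p = t q + e` with `‖e‖ ≤ δ^τ`.
For a point `w` of the unit ball close to both `V_p` and `V_q`, expanding `Q(p, p)` eliminates `w`
and bounds `|t (t - 1) Q(q, q)|` by `O(δ^{1-2c} + δ^{τ-c})`. On the other hand the separation
hypotheses give `|t|, |t - 1| ≳ δ^c`, and `dist(q, C) ≥ δ^{1/4}` gives `|Q(q, q)| ≥ δ^{1/4 + c}`;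
for `c ≤ 1/32` and small `δ` these bounds are incompatible. -/

section Bisector

variable {E : Type*} [NormedAddCommGroup E] [InnerProductSpace ℝ E] (J : E →ₗᵢ[ℝ] E)

/-- For `J = id` this is the perpendicular bisector of `0` and `p`; `Vplane p` is
`bisector mirror p` by definition. -/
def bisector (p : E) : Set E :=
  {w | ⟪w - (1/2 : ℝ) • p, J p⟫ = 0}

lemma half_smul_mem_bisector (p : E) : (1/2 : ℝ) • p ∈ bisector J p := by
  simp [bisector]

lemma abs_inner_le_infDist_bisector_mul_norm (p w : E) :
    |⟪w - (1/2 : ℝ) • p, J p⟫| ≤ infDist w (bisector J p) * ‖p‖ := by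
  rcases (norm_nonneg p).eq_or_lt with hp | hp
  · simp [norm_eq_zero.1 hp.symm]
  rw [← div_le_iff₀ hp, le_infDist ⟨_, half_smul_mem_bisector J p⟩]
  intro w' (hw' : ⟪w' - (1/2 : ℝ) • p, J p⟫ = 0)
  rw [div_le_iff₀ hp, dist_eq_norm, ← J.norm_map p]
  calc |⟪w - (1/2 : ℝ) • p, J p⟫| = |⟪w - w', J p⟫| := by
        rw [← sub_add_sub_cancel w w' ((1/2 : ℝ) • p), inner_add_left, hw', add_zero]
    _ ≤ ‖w - w'‖ * ‖J p‖ := abs_real_inner_le_norm _ _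

lemma mul_sub_one_mul_inner_self_eq (p q w : E) (t : ℝ) :
    t * (t - 1) * ⟪q, J q⟫ =
      2 * ⟪w, J (p - t • q)⟫ - 2 * ⟪w - (1/2 : ℝ) • p, J p⟫ + 2 * t * ⟪w - (1/2 : ℝ) • q, J q⟫
        - t * ⟪q, J (p - t • q)⟫ - t * ⟪p - t • q, J q⟫ - ⟪p - t • q, J (p - t • q)⟫ := by
  obtain ⟨e, rfl⟩ : ∃ e, p = t • q + e := ⟨p - t • q, by abel⟩
  simp only [add_sub_cancel_left, map_add, map_smul, inner_add_left, inner_add_right,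
    inner_sub_left, real_inner_smul_left, real_inner_smul_right]
  ring

lemma abs_mul_sub_one_mul_inner_self_le {p q w : E} {t s : ℝ}
    (hw : ‖w‖ ≤ 1) (hp : ‖p‖ ≤ 1) (hq : ‖q‖ ≤ 1)
    (hwp : infDist w (bisector J p) ≤ s) (hwq : infDist w (bisector J q) ≤ s) :
    |t * (t - 1) * ⟪q, J q⟫| ≤ 2 * (1 + |t|) * (s + ‖p - t • q‖) + ‖p - t • q‖ ^ 2 := by
  have hJ (u v : E) : |⟪u, J v⟫| ≤ ‖u‖ * ‖v‖ :=
    (abs_real_inner_le_norm u (J v)).trans_eq (by rw [J.norm_map])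
  have hs : 0 ≤ s := infDist_nonneg.trans hwp
  set e := p - t • q
  have hwe : |⟪w, J e⟫| ≤ ‖e‖ := (hJ w e).trans (mul_le_of_le_one_left (norm_nonneg e) hw)
  have hqe : |t * ⟪q, J e⟫| ≤ |t| * ‖e‖ := by
    rw [abs_mul]
    exact mul_le_mul_of_nonneg_left ((hJ q e).trans (mul_le_of_le_one_left (norm_nonneg e) hq))
      (abs_nonneg t)
  have heq : |t * ⟪e, J q⟫| ≤ |t| * ‖e‖ := by
    rw [abs_mul]
    exact mul_le_mul_of_nonneg_left ((hJ e q).trans (mul_le_of_le_one_right (norm_nonneg e) hq))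
      (abs_nonneg t)
  have hee : |⟪e, J e⟫| ≤ ‖e‖ ^ 2 := (hJ e e).trans_eq (sq _).symm
  have hA : |⟪w - (1/2 : ℝ) • p, J p⟫| ≤ s :=
    (abs_inner_le_infDist_bisector_mul_norm J p w).trans
      ((mul_le_mul_of_nonneg_right hwp (norm_nonneg p)).trans (mul_le_of_le_one_right hs hp))
  have hB : |t * ⟪w - (1/2 : ℝ) • q, J q⟫| ≤ |t| * s := by
    rw [abs_mul]
    exact mul_le_mul_of_nonneg_left ((abs_inner_le_infDist_bisector_mul_norm J q w).trans
      ((mul_le_mul_of_nonneg_right hwq (norm_nonneg q)).trans (mul_le_of_le_one_right hs hq)))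
      (abs_nonneg t)
  rw [mul_sub_one_mul_inner_self_eq J p q w t]
  rw [abs_le] at hwe hqe heq hee hA hB ⊢
  constructor <;> linarith

lemma pow_three_mul_abs_inner_self_le {p q w : E} {t a s η : ℝ}
    (hw : ‖w‖ ≤ 1) (hp : ‖p‖ ≤ 1) (hq : ‖q‖ ≤ 1)
    (hap : a ≤ ‖p‖) (haq : a ≤ ‖q‖) (hapq : a ≤ ‖p - q‖)
    (hline : ‖p - t • q‖ ≤ η) (hηa : 2 * η ≤ a)
    (hwp : infDist w (bisector J p) ≤ s) (hwq : infDist w (bisector J q) ≤ s) :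
    a ^ 3 * |⟪q, J q⟫| ≤ 24 * (s + η) + 4 * η ^ 2 := by
  have key := abs_mul_sub_one_mul_inner_self_le J (t := t) hw hp hq hwp hwq
  have hs : 0 ≤ s := infDist_nonneg.trans hwp
  have hη : 0 ≤ η := (norm_nonneg _).trans hline
  have ha : 0 ≤ a := by linarith
  have htq : ‖t • q‖ = |t| * ‖q‖ := by rw [norm_smul, Real.norm_eq_abs]
  have ht : a / 2 ≤ |t| := by
    have := norm_le_insert' p (t • q)
    linarith [mul_le_of_le_one_right (abs_nonneg t) hq]
  have ht1 : a / 2 ≤ |t - 1| := by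
    have := norm_le_insert' (p - q) ((t - 1) • q)
    rw [show p - q - (t - 1) • q = p - t • q by module, norm_smul, Real.norm_eq_abs] at this
    linarith [mul_le_of_le_one_right (abs_nonneg (t - 1)) hq]
  have hat : a * |t| ≤ 2 := by
    have := norm_le_insert' (t • q) p
    rw [← norm_neg (t • q - p), neg_sub] at this
    linarith [mul_le_mul_of_nonneg_left haq (abs_nonneg t)]
  calc a ^ 3 * |⟪q, J q⟫| = 4 * a * (a / 2 * (a / 2) * |⟪q, J q⟫|) := by ring
    _ ≤ 4 * a * (|t| * |t - 1| * |⟪q, J q⟫|) := by gcongr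
    _ = 4 * a * |t * (t - 1) * ⟪q, J q⟫| := by rw [abs_mul, abs_mul]
    _ ≤ 4 * a * (2 * (1 + |t|) * (s + η) + η ^ 2) := by
        gcongr
        exact key.trans (by gcongr)
    _ ≤ 24 * (s + η) + 4 * η ^ 2 := by nlinarith

end Bisector

lemma exists_norm_sub_smul_eq_infDist {F : Type*} [NormedAddCommGroup F] [NormedSpace ℝ F]
    [FiniteDimensional ℝ F] (p q : F) :
    ∃ t : ℝ, ‖p - t • q‖ = infDist p (Submodule.span ℝ {q} : Set F) := by
  obtain ⟨y, hy, h⟩ := (Submodule.span ℝ {q}).closed_of_finiteDimensional.exists_infDist_eq_dist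
    ⟨0, Submodule.zero_mem _⟩ p
  obtain ⟨t, rfl⟩ := Submodule.mem_span_singleton.1 hy
  exact ⟨t, by rw [h, dist_eq_norm]⟩

noncomputable def mirror : EuclideanSpace ℝ (Fin 3) →ₗᵢ[ℝ] EuclideanSpace ℝ (Fin 3) where
  toFun v := e3 (v 0) (v 1) (-(v 2))
  map_add' u v := by ext i; fin_cases i <;> simp [e3]; ring
  map_smul' a v := by ext i; fin_cases i <;> simp [e3]
  norm_map' v := by simp [EuclideanSpace.norm_eq, Fin.sum_univ_three, e3]

lemma inner_mirror_self (v : EuclideanSpace ℝ (Fin 3)) :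
    ⟪v, mirror v⟫ = v 0 ^ 2 + v 1 ^ 2 - v 2 ^ 2 := by
  simp [mirror, e3, PiLp.inner_apply, Fin.sum_univ_three]
  ring

lemma infDist_stdCone_mul_norm_le (p : EuclideanSpace ℝ (Fin 3)) :
    infDist p stdCone * ‖p‖ ≤ |⟪p, mirror p⟫| := by
  -- `(p 0, p 1, z)` is the point of the cone above `(p 0, p 1)` on the side of `p 2`.
  obtain ⟨z, hz, hpz⟩ : ∃ z, p 0 ^ 2 + p 1 ^ 2 = z ^ 2 ∧ 0 ≤ p 2 * z := by
    have hr := Real.sq_sqrt (add_nonneg (sq_nonneg (p 0)) (sq_nonneg (p 1)))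
    rcases le_total 0 (p 2) with h | h
    · exact ⟨_, hr.symm, mul_nonneg h (Real.sqrt_nonneg _)⟩
    · exact ⟨-_, by rw [neg_sq, hr], mul_nonneg_of_nonpos_of_nonpos h (by simp)⟩
  have hmem : e3 (p 0) (p 1) z ∈ stdCone := hz
  have hdist : dist p (e3 (p 0) (p 1) z) = |p 2 - z| := by
    simp [EuclideanSpace.dist_eq, Fin.sum_univ_three, e3, Real.dist_eq, Real.sqrt_sq_eq_abs]
  have hnorm : ‖p‖ ≤ |p 2 + z| := by
    rw [← abs_norm]
    refine sq_le_sq.1 ?_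
    rw [EuclideanSpace.real_norm_sq_eq, Fin.sum_univ_three]
    nlinarith
  calc infDist p stdCone * ‖p‖ ≤ |p 2 - z| * |p 2 + z| :=
        mul_le_mul (hdist ▸ infDist_le_dist_of_mem hmem) hnorm (norm_nonneg p) (abs_nonneg _)
    _ = |⟪p, mirror p⟫| := by
        rw [← abs_mul, inner_mirror_self, hz, ← abs_neg]
        ring_nf

/-- `52 = 24 + 24 + 4` comes from `pow_three_mul_abs_inner_self_le`. -/
lemma rpow_separation_estimates {τ R c δ : ℝ} (hτ : 1 / 2 ≤ τ) (hR : 1 ≤ R) (hc : c ≤ 1 / 32)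
    (hδ : 0 < δ) (hδ₀ : δ < (52 * R)⁻¹ ^ 8) :
    2 * δ ^ τ ≤ δ ^ c ∧
      24 * (R * δ ^ (1 - c) + δ ^ τ) + 4 * (δ ^ τ) ^ 2 < (δ ^ c) ^ 3 * (δ ^ (1 / 4 : ℝ) * δ ^ c) := by
  set y := δ ^ (1 / 32 : ℝ)
  have hpow (n : ℕ) : δ ^ ((n : ℝ) / 32) = y ^ n := by
    rw [← Real.rpow_natCast, ← Real.rpow_mul hδ.le]
    ring_nf
  have hy : 0 < y := by positivity
  have hy4 : 52 * R * y ^ 4 < 1 := by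
    have : (y ^ 4) ^ 8 < (52 * R)⁻¹ ^ 8 := by
      rwa [← pow_mul, ← hpow 32, Nat.cast_ofNat, div_self (by norm_num), Real.rpow_one]
    have := lt_of_pow_lt_pow_left₀ 8 (by positivity) this
    rwa [← lt_inv_mul_iff₀ (by positivity), mul_one]
  have hδ1 : δ ≤ 1 :=
    hδ₀.le.trans (pow_le_one₀ (by positivity) (inv_le_one_of_one_le₀ (by linarith)))
  have hle {a b : ℝ} (h : a ≤ b) : δ ^ b ≤ δ ^ a := Real.rpow_le_rpow_of_exponent_ge hδ hδ1 h
  have hτy : δ ^ τ ≤ y ^ 16 := hpow 16 ▸ hle (by norm_num; linarith)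
  have hcy : δ ^ (1 - c) ≤ y ^ 16 := hpow 16 ▸ hle (by norm_num; linarith)
  have hyc : y ≤ δ ^ c := hle hc
  have h14 : δ ^ (1 / 4 : ℝ) = y ^ 8 := by rw [← hpow 8]; norm_num
  have hy1 : y ≤ 1 := Real.rpow_le_one hδ.le hδ1 (by norm_num)
  have hy16 : y ^ 16 ≤ 1 := pow_le_one₀ hy.le hy1
  have hRy : y ^ 16 ≤ R * y ^ 16 := le_mul_of_one_le_left (by positivity) hR
  constructor
  · have : y ^ 16 ≤ y ^ 4 * y := by
      rw [← pow_succ]; exact pow_le_pow_of_le_one hy.le hy1 (by norm_num)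
    nlinarith [mul_lt_mul_of_pos_right hy4 hy]
  · have hyc3 : y ^ 3 ≤ (δ ^ c) ^ 3 := pow_le_pow_left₀ hy.le hyc 3
    calc 24 * (R * δ ^ (1 - c) + δ ^ τ) + 4 * (δ ^ τ) ^ 2
        ≤ 24 * (R * y ^ 16 + y ^ 16) + 4 * (y ^ 16) ^ 2 := by gcongr
      _ ≤ 52 * R * y ^ 16 := by linarith [mul_le_of_le_one_left (pow_nonneg hy.le 16) hy16]
      _ = 52 * R * y ^ 4 * y ^ 12 := by ring
      _ < y ^ 12 := by nlinarith [pow_pos hy 12]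
      _ = y ^ 3 * (y ^ 8 * y) := by ring
      _ ≤ (δ ^ c) ^ 3 * (δ ^ (1 / 4 : ℝ) * δ ^ c) := by rw [h14]; gcongr

/-- Proposition B.5: if `p, q ∈ B(0,1)` are `δ^c`-separated from `0` and from each other,
both lie `δ^{1/4}`-far from the cone `C`, and `dist(p, span q) ≤ δ^τ`, then the
`R·δ^{1-c}`-neighbourhoods of `V_p` and `V_q` do not meet in `B(0,1)`; in particular
`C(δ) ∩ (p + C(δ)) ∩ (q + C(δ)) ∩ B(0,1) = ∅` whenever the two cone intersections lie
in these plane neighbourhoods inside `B(0,1)`. -/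
theorem separated_planes (τ R : ℝ) (hτ : τ ∈ Set.Ioo (1/2 : ℝ) 1) (hR : 1 ≤ R) :
    ∃ c₀ : ℝ, 0 < c₀ ∧ ∀ c : ℝ, 0 < c → c ≤ c₀ →
      ∃ δ₀ : ℝ, 0 < δ₀ ∧ ∀ δ : ℝ, 0 < δ → δ < δ₀ →
      ∀ p q : EuclideanSpace ℝ (Fin 3),
        p ∈ Metric.closedBall (0 : EuclideanSpace ℝ (Fin 3)) 1 →
        q ∈ Metric.closedBall (0 : EuclideanSpace ℝ (Fin 3)) 1 →
        δ ^ c ≤ ‖p‖ → δ ^ c ≤ ‖q‖ → δ ^ c ≤ ‖p - q‖ →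
        δ ^ (1/4 : ℝ) ≤ Metric.infDist p stdCone →
        δ ^ (1/4 : ℝ) ≤ Metric.infDist q stdCone →
        Metric.infDist p (lineSpan q) ≤ δ ^ τ →
        (nbhd (Vplane p) (R * δ ^ (1 - c)) ∩ nbhd (Vplane q) (R * δ ^ (1 - c)) ∩
            Metric.closedBall 0 1 = ∅) ∧
        ((nbhd stdCone δ ∩ {x | x - p ∈ nbhd stdCone δ} ∩ Metric.closedBall 0 1 ⊆
            nbhd (Vplane p) (R * δ ^ (1 - c)) ∧
          nbhd stdCone δ ∩ {x | x - q ∈ nbhd stdCone δ} ∩ Metric.closedBall 0 1 ⊆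
            nbhd (Vplane q) (R * δ ^ (1 - c))) →
          nbhd stdCone δ ∩ {x | x - p ∈ nbhd stdCone δ} ∩
            {x | x - q ∈ nbhd stdCone δ} ∩ Metric.closedBall 0 1 = ∅) := by
  refine ⟨1 / 32, by norm_num, fun c _ hc => ⟨(52 * R)⁻¹ ^ 8, by positivity, ?_⟩⟩
  intro δ hδ hδ₀ p q hp hq hpc hqc hpqc hpC hqC hpq
  rw [mem_closedBall_zero_iff] at hp hq
  obtain ⟨hδτ, hgap⟩ := rpow_separation_estimates hτ.1.le hR hc hδ hδ₀
  obtain ⟨t, ht⟩ := exists_norm_sub_smul_eq_infDist p q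
  have hQq : δ ^ (1 / 4 : ℝ) * δ ^ c ≤ |⟪q, mirror q⟫| :=
    (mul_le_mul hqC hqc (by positivity) infDist_nonneg).trans (infDist_stdCone_mul_norm_le q)
  have key : nbhd (Vplane p) (R * δ ^ (1 - c)) ∩ nbhd (Vplane q) (R * δ ^ (1 - c)) ∩
      closedBall 0 1 = ∅ := by
    refine eq_empty_of_forall_notMem fun w ⟨⟨hwp, hwq⟩, hw⟩ => ?_
    have := pow_three_mul_abs_inner_self_le mirror (mem_closedBall_zero_iff.1 hw) hp hq
      hpc hqc hpqc (ht.trans_le hpq) hδτ hwp hwq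
    have := mul_le_mul_of_nonneg_left hQq (by positivity : 0 ≤ (δ ^ c) ^ 3)
    linarith
  refine ⟨key, fun ⟨hVp, hVq⟩ => eq_empty_of_forall_notMem fun x ⟨⟨⟨hx, hxp⟩, hxq⟩, hx1⟩ => ?_⟩
  exact key.subset ⟨⟨hVp ⟨⟨hx, hxp⟩, hx1⟩, hVq ⟨⟨hx, hxq⟩, hx1⟩⟩, hx1⟩
end

section
/- There exists c₀ > 0 such that for every 0 < c ≤ c₀ there is δ₀ > 0 with the following property for all 0 < δ < δ₀. Let C = {(x, y, z) ∈ ℝ³ : x² + y² = z²} and let L ⊂ ℝ³ be an arbitrary affine line. Then the intersection L(δ^c) ∩ C(δ) ∩ B(0,1) is contained in the union of the δ^{c²/5}-neighbourhoods of at most two lines on C. -/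
open Set Metric

/-!
Normalise the line to `w + t • u` with `‖u‖ = 1` and `w ⟂ u`. A point of `L(ε) ∩ C(ε) ∩ B(0,1)`
lies within `2ε` of a point `w + t • u` with `|t| ≤ 2` at which the cone form
`Q x = x₀² + x₁² - x₂²` is `O(ε)`, and `Q (w + t • u) = A t² + B t + C` is a quadratic in `t`.
If `|A| ≥ ρ⁴` its sublevel set lies near its two roots, and if `|A| < ρ⁴` but `|B| ≥ 20ρ³` near
the root of its linear part; a short piece of the line near the cone stays near a single line on
the cone. Otherwise `A`, `B`, `C` are all small: then `w` is small and `u` is close to a point `g`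
of the cone, so the whole relevant segment lies near the line spanned by `g`.
With `ε = δ^c` and `ρ = δ^(c²/5)`, the needed `ε ≤ ρ⁸` holds for all `δ < 1` once `c ≤ 5/8`.
-/

local notation "ℝ³" => EuclideanSpace ℝ (Fin 3)

def coneForm (x : ℝ³) : ℝ := x 0 ^ 2 + x 1 ^ 2 - x 2 ^ 2

def conePolar (x y : ℝ³) : ℝ := x 0 * y 0 + x 1 * y 1 - x 2 * y 2

lemma mem_stdCone_iff {x : ℝ³} : x ∈ stdCone ↔ coneForm x = 0 := by
  simp only [stdCone, coneForm, mem_ofPred_eq, sub_eq_zero]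

lemma zero_mem_stdCone : (0 : ℝ³) ∈ stdCone := by simp [stdCone]

lemma stdCone_nonempty : stdCone.Nonempty := ⟨0, zero_mem_stdCone⟩

lemma norm_sq_eq_coord (x : ℝ³) : ‖x‖ ^ 2 = x 0 ^ 2 + x 1 ^ 2 + x 2 ^ 2 := by
  simp [EuclideanSpace.real_norm_sq_eq, Fin.sum_univ_three]

lemma inner_eq_coord (x y : ℝ³) : inner ℝ x y = x 0 * y 0 + x 1 * y 1 + x 2 * y 2 := by
  simp [PiLp.inner_apply, Fin.sum_univ_three, mul_comm]

lemma coneForm_add_smul (w u : ℝ³) (t : ℝ) :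
    coneForm (w + t • u) = coneForm u * t ^ 2 + 2 * conePolar w u * t + coneForm w := by
  simp only [coneForm, conePolar, PiLp.add_apply, PiLp.smul_apply, smul_eq_mul]
  ring

lemma abs_conePolar_le (x y : ℝ³) : |conePolar x y| ≤ ‖x‖ * ‖y‖ := by
  apply abs_le_of_sq_le_sq _ (by positivity)
  rw [mul_pow, norm_sq_eq_coord, norm_sq_eq_coord, conePolar]
  nlinarith [sq_nonneg (x 0 * y 1 - x 1 * y 0), sq_nonneg (x 0 * y 2 + x 2 * y 0),
    sq_nonneg (x 1 * y 2 + x 2 * y 1)]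

lemma abs_coneForm_sub_le (x y : ℝ³) : |coneForm x - coneForm y| ≤ ‖x - y‖ * ‖x + y‖ := by
  have : coneForm x - coneForm y = conePolar (x - y) (x + y) := by
    simp only [coneForm, conePolar, PiLp.add_apply, PiLp.sub_apply]
    ring
  exact this ▸ abs_conePolar_le _ _

/-- `w ⟂ u` turns `conePolar w u` into `-2 w₂ u₂`, and `u₂² ≥ 1/4` since `u` is a unit vector
with `coneForm u ≤ 1/2`. -/
lemma norm_sq_le_of_inner_eq_zero {w u : ℝ³} (hwu : inner ℝ w u = 0) (hu : ‖u‖ = 1)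
    (hQ : coneForm u ≤ 1 / 2) : ‖w‖ ^ 2 ≤ coneForm w + 2 * conePolar w u ^ 2 := by
  have hu' : u 0 ^ 2 + u 1 ^ 2 + u 2 ^ 2 = 1 := by rw [← norm_sq_eq_coord, hu, one_pow]
  rw [inner_eq_coord] at hwu
  have hP : conePolar w u = -2 * (w 2 * u 2) := by rw [conePolar]; linarith
  rw [coneForm] at hQ
  rw [norm_sq_eq_coord, hP, coneForm]
  nlinarith [sq_nonneg (w 2)]

lemma sq_sub_le_abs_sq_sub_sq {a b : ℝ} (ha : 0 ≤ a) (hb : 0 ≤ b) :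
    (a - b) ^ 2 ≤ |a ^ 2 - b ^ 2| := by
  rw [sq_sub_sq, abs_mul, ← sq_abs, sq, abs_of_nonneg (add_nonneg ha hb)]
  gcongr
  exact abs_sub_le_iff.2 ⟨by linarith, by linarith⟩

/-- Move only the last coordinate, to `±√(x₀² + x₁²)`. -/
lemma exists_mem_stdCone_norm_sub_sq_le (x : ℝ³) : ∃ g ∈ stdCone, ‖x - g‖ ^ 2 ≤ |coneForm x| := by
  set r := √(x 0 ^ 2 + x 1 ^ 2)
  have hr : r ^ 2 = x 0 ^ 2 + x 1 ^ 2 := Real.sq_sqrt (by positivity)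
  have hQ : |coneForm x| = |(|x 2|) ^ 2 - r ^ 2| := by rw [sq_abs, hr, coneForm, abs_sub_comm]
  refine ⟨!₂[x 0, x 1, if 0 ≤ x 2 then r else -r], by split_ifs <;> simp [stdCone, hr], ?_⟩
  have hdist (s : ℝ) : ‖x - !₂[x 0, x 1, s]‖ ^ 2 = (x 2 - s) ^ 2 := by simp [norm_sq_eq_coord]
  calc ‖x - !₂[x 0, x 1, if 0 ≤ x 2 then r else -r]‖ ^ 2 = (|x 2| - r) ^ 2 := by
        rw [hdist]
        split_ifs with h
        · rw [abs_of_nonneg h]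
        · rw [abs_of_neg (not_le.1 h)]
          ring
    _ ≤ |coneForm x| := hQ ▸ sq_sub_le_abs_sq_sub_sq (abs_nonneg _) (Real.sqrt_nonneg _)

lemma exists_ne_zero_mem_stdCone_lineSpan_subset {y : ℝ³} (hy : y ∈ stdCone) :
    ∃ g : ℝ³, g ≠ 0 ∧ g ∈ stdCone ∧ lineSpan y ⊆ lineSpan g := by
  by_cases hy0 : y = 0
  · refine ⟨!₂[1, 0, 1], fun h => by simpa using congrArg (· 0) h, by simp [stdCone], ?_⟩
    simp [lineSpan, hy0]
  · exact ⟨y, hy0, hy, subset_rfl⟩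

lemma infDist_lineSpan_le_of_subset {x y g : ℝ³} (h : lineSpan y ⊆ lineSpan g) :
    infDist x (lineSpan g) ≤ infDist x (lineSpan y) :=
  infDist_le_infDist_of_subset h ⟨0, Submodule.zero_mem _⟩

lemma infDist_lineSpan_le (x g : ℝ³) (t : ℝ) : infDist x (lineSpan g) ≤ ‖x - t • g‖ :=
  (infDist_le_dist_of_mem (Submodule.smul_mem _ t (Submodule.mem_span_singleton_self g))).trans_eq
    (dist_eq_norm _ _)

lemma infDist_lineSpan_le_dist_add (x w u g : ℝ³) (t : ℝ) :
    infDist x (lineSpan g) ≤ dist x (w + t • u) + ‖w‖ + |t| * ‖u - g‖ := by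
  refine (infDist_lineSpan_le x g t).trans ?_
  rw [dist_eq_norm, ← Real.norm_eq_abs, ← norm_smul]
  calc ‖x - t • g‖ = ‖(x - (w + t • u)) + w + t • (u - g)‖ := by congr 1; module
    _ ≤ _ := norm_add₃_le

lemma exists_forall_dist_le_of_forall_dist_le {α : Type*} [PseudoMetricSpace α] {S K : Set α}
    {d e : ℝ} (hK : K.Nonempty) (he : 0 < e) (hS : ∀ x ∈ S, ∀ y ∈ S, dist x y ≤ d)
    (hSK : ∀ x ∈ S, infDist x K ≤ e) : ∃ z ∈ K, ∀ x ∈ S, dist x z ≤ d + 2 * e := by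
  rcases S.eq_empty_or_nonempty with rfl | ⟨x₀, hx₀⟩
  · exact ⟨hK.some, hK.some_mem, by simp⟩
  obtain ⟨z, hz, hdist⟩ :=
    (infDist_lt_iff hK).1 ((hSK x₀ hx₀).trans_lt (by linarith : e < 2 * e))
  exact ⟨z, hz, fun x hx => (dist_triangle x x₀ z).trans (by linarith [hS x hx x₀ hx₀])⟩

lemma exists_unit_inner_eq_zero_line_eq {E : Type*} [NormedAddCommGroup E]
    [InnerProductSpace ℝ E] (w v : E) (hv : v ≠ 0) : ∃ w' u : E, ‖u‖ = 1 ∧ inner ℝ w' u = 0 ∧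
      {x | ∃ t : ℝ, x = w + t • v} = {x | ∃ t : ℝ, x = w' + t • u} := by
  have hv' : ‖v‖ ≠ 0 := norm_ne_zero_iff.2 hv
  set u := ‖v‖⁻¹ • v
  have hu : ‖u‖ = 1 := norm_smul_inv_norm hv
  have hvu : ∀ s : ℝ, s • v = (s * ‖v‖) • u := fun s => by rw [mul_smul, smul_inv_smul₀ hv']
  refine ⟨w - inner ℝ w u • u, u, hu, ?_, ?_⟩
  · rw [inner_sub_left, real_inner_smul_left, real_inner_self_eq_norm_sq, hu]
    ring
  ext x
  constructor
  · rintro ⟨t, rfl⟩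
    exact ⟨inner ℝ w u + t * ‖v‖, by rw [hvu]; module⟩
  · rintro ⟨t, rfl⟩
    refine ⟨(t - inner ℝ w u) / ‖v‖, ?_⟩
    rw [hvu, div_mul_cancel₀ _ hv']
    module

lemma sq_abs_sub_sqrt_le {s R D : ℝ} (h : |s ^ 2 - R| ≤ D) : (|s| - √R) ^ 2 ≤ D := by
  rcases le_or_gt 0 R with hR | hR
  · calc (|s| - √R) ^ 2 ≤ |(|s|) ^ 2 - √R ^ 2| :=
          sq_sub_le_abs_sq_sub_sq (abs_nonneg s) (Real.sqrt_nonneg R)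
      _ ≤ D := by rwa [sq_abs, Real.sq_sqrt hR]
  · rw [Real.sqrt_eq_zero'.2 hR.le, sub_zero, sq_abs]
    linarith [le_abs_self (s ^ 2 - R)]

/-- Completing the square: `t₁, t₂ = -B/2A ± √(B²/4A² - C/A)`, which coincide when the radicand
is negative (`Real.sqrt` is then `0`). -/
lemma exists_sq_sub_le_of_abs_quadratic_le {A B C η : ℝ} (hA : A ≠ 0) :
    ∃ t₁ t₂ : ℝ, ∀ t, |A * t ^ 2 + B * t + C| ≤ η →
      (t - t₁) ^ 2 ≤ η / |A| ∨ (t - t₂) ^ 2 ≤ η / |A| := by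
  set β := B / (2 * A)
  set R := β ^ 2 - C / A
  refine ⟨√R - β, -√R - β, fun t ht => ?_⟩
  have hsq : |(t + β) ^ 2 - R| ≤ η / |A| := by
    rwa [le_div_iff₀ (abs_pos.2 hA), ← abs_mul,
      show ((t + β) ^ 2 - R) * A = A * t ^ 2 + B * t + C by simp only [β, R]; field_simp; ring]
  have := sq_abs_sub_sqrt_le hsq
  rcases le_or_gt 0 (t + β) with hs | hs
  · left
    rwa [abs_of_nonneg hs, show t + β - √R = t - (√R - β) by ring] at this
  · right
    rwa [abs_of_neg hs, show -(t + β) - √R = -(t - (-√R - β)) by ring, neg_sq] at this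

lemma abs_add_div_le_of_abs_quadratic_le {A B C η t : ℝ} (hB : B ≠ 0)
    (h : |A * t ^ 2 + B * t + C| ≤ η) : |t + C / B| ≤ (η + |A| * t ^ 2) / |B| := by
  rw [le_div_iff₀ (abs_pos.2 hB), ← abs_mul,
    show (t + C / B) * B = (A * t ^ 2 + B * t + C) - A * t ^ 2 by field_simp; ring]
  refine (abs_sub _ _).trans ?_
  rw [abs_mul, abs_of_nonneg (sq_nonneg t)]
  linarith

lemma quadratic_sublevel_near_two_points_or {ρ ε A B C : ℝ} (hρ : 0 < ρ) (hρ1 : ρ ≤ 1 / 16)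
    (hε : ε ≤ ρ ^ 8) :
    (∃ t₁ t₂ : ℝ, ∀ t, t ^ 2 ≤ 4 → |A * t ^ 2 + B * t + C| ≤ 16 * ε →
      |t - t₁| ≤ ρ / 4 ∨ |t - t₂| ≤ ρ / 4) ∨
    (|A| < ρ ^ 4 ∧ |B| < 20 * ρ ^ 3 ∧
      ∀ t, t ^ 2 ≤ 4 → |A * t ^ 2 + B * t + C| ≤ 16 * ε → |C| ≤ 41 * ρ ^ 3) := by
  have hρ4 : 16 * ρ ^ 4 ≤ 1 := by
    calc 16 * ρ ^ 4 ≤ 16 * (1 / 16) ^ 4 := by gcongr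
      _ ≤ 1 := by norm_num
  rcases le_or_gt (ρ ^ 4) |A| with hA | hA
  · have hA0 : A ≠ 0 := abs_pos.1 ((pow_pos hρ 4).trans_le hA)
    obtain ⟨t₁, t₂, h⟩ := exists_sq_sub_le_of_abs_quadratic_le (B := B) (C := C) (η := 16 * ε) hA0
    have hr : 16 * ε / |A| ≤ (ρ / 4) ^ 2 := by
      have h256 : 256 * ρ ^ 2 ≤ 1 := by nlinarith
      rw [div_le_iff₀ (abs_pos.2 hA0)]
      nlinarith [mul_le_mul_of_nonneg_left hA (sq_nonneg (ρ / 4)),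
        mul_le_mul_of_nonneg_right h256 (pow_pos hρ 6).le]
    refine Or.inl ⟨t₁, t₂, fun t _ ht => (h t ht).imp ?_ ?_⟩ <;>
      exact fun h' => abs_le_of_sq_le_sq (h'.trans hr) (by positivity)
  rcases le_or_gt (20 * ρ ^ 3) |B| with hB | hB
  · have hB0 : B ≠ 0 := abs_pos.1 ((by positivity : (0 : ℝ) < 20 * ρ ^ 3).trans_le hB)
    refine Or.inl ⟨-(C / B), -(C / B), fun t ht2 ht => Or.inl ?_⟩
    rw [sub_neg_eq_add]
    refine (abs_add_div_le_of_abs_quadratic_le hB0 ht).trans ?_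
    rw [div_le_iff₀ (abs_pos.2 hB0)]
    nlinarith [pow_pos hρ 3, abs_nonneg A, mul_le_mul hA.le ht2 (sq_nonneg t) (pow_pos hρ 4).le]
  refine Or.inr ⟨hA, hB, fun t ht2 hq => ?_⟩
  have ht : |t| ≤ 2 := abs_le_of_sq_le_sq (by linarith) zero_le_two
  have hC : |C| ≤ |A * t ^ 2 + B * t + C| + |A * t ^ 2| + |B * t| :=
    calc |C| = |(A * t ^ 2 + B * t + C) - A * t ^ 2 - B * t| := by ring_nf
      _ ≤ _ := (abs_sub _ _).trans (by gcongr; exact abs_sub _ _)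
  rw [abs_mul, abs_mul, abs_of_nonneg (sq_nonneg t)] at hC
  have hρ8 : 16 * ρ ^ 8 ≤ ρ ^ 4 := by nlinarith [pow_pos hρ 4]
  nlinarith [pow_pos hρ 3, mul_le_mul hA.le ht2 (sq_nonneg t) (pow_pos hρ 4).le,
    mul_le_mul hB.le ht (abs_nonneg t) (by positivity),
    mul_le_mul_of_nonneg_left hρ1 (pow_pos hρ 3).le]

lemma exists_line_param_of_infDist_le {w u x : ℝ³} {ε : ℝ} (hu : ‖u‖ = 1)
    (hwu : inner ℝ w u = 0) (hε : 0 < ε) (hε1 : ε ≤ 1 / 2)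
    (hxL : infDist x {y | ∃ t : ℝ, y = w + t • u} ≤ ε) (hxC : infDist x stdCone ≤ ε)
    (hx : ‖x‖ ≤ 1) :
    ∃ t : ℝ, dist x (w + t • u) ≤ 2 * ε ∧ t ^ 2 ≤ 4 ∧ |coneForm (w + t • u)| ≤ 16 * ε := by
  have hL : {y | ∃ t : ℝ, y = w + t • u}.Nonempty := ⟨w, 0, by simp⟩
  obtain ⟨_, ⟨t, rfl⟩, hxy⟩ := (infDist_lt_iff hL).1 (hxL.trans_lt (by linarith : ε < 2 * ε))
  obtain ⟨z, hz, hxz⟩ :=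
    (infDist_lt_iff stdCone_nonempty).1 (hxC.trans_lt (by linarith : ε < 2 * ε))
  rw [dist_comm, dist_eq_norm] at hxy hxz
  have hy : ‖w + t • u‖ ≤ 2 := by linarith [norm_le_norm_add_norm_sub' (w + t • u) x]
  have hz2 : ‖z‖ ≤ 2 := by linarith [norm_le_norm_add_norm_sub' z x]
  refine ⟨t, by rw [dist_comm, dist_eq_norm]; exact hxy.le, ?_, ?_⟩
  · have hpyth : ‖w + t • u‖ ^ 2 = ‖w‖ ^ 2 + t ^ 2 := by
      rw [norm_add_sq_real, real_inner_smul_right, hwu, norm_smul, hu, Real.norm_eq_abs,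
        mul_zero, mul_zero, add_zero, mul_one, sq_abs]
    nlinarith [norm_nonneg (w + t • u), sq_nonneg ‖w‖]
  · have hyz : ‖w + t • u - z‖ ≤ 4 * ε := by
      linarith [norm_sub_le_norm_sub_add_norm_sub (w + t • u) x z, norm_sub_rev x z]
    calc |coneForm (w + t • u)| = |coneForm (w + t • u) - coneForm z| := by
          rw [mem_stdCone_iff.1 hz, sub_zero]
      _ ≤ ‖w + t • u - z‖ * ‖w + t • u + z‖ := abs_coneForm_sub_le _ _
      _ ≤ (4 * ε) * 4 := by
          gcongr
          exact (norm_add_le _ _).trans (by linarith)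
      _ = 16 * ε := by ring

lemma exists_mem_stdCone_forall_infDist_lineSpan_le {w u : ℝ³} (hu : ‖u‖ = 1) {ε r : ℝ}
    (hε : 0 < ε) (t₀ : ℝ) : ∃ z ∈ stdCone, ∀ x, infDist x stdCone ≤ ε → ∀ t, |t - t₀| ≤ r →
      dist x (w + t • u) ≤ 2 * ε → infDist x (lineSpan z) ≤ 2 * r + 6 * ε := by
  set S := {x | infDist x stdCone ≤ ε ∧ ∃ t, |t - t₀| ≤ r ∧ dist x (w + t • u) ≤ 2 * ε}
  have hS : ∀ x ∈ S, ∀ y ∈ S, dist x y ≤ 2 * r + 4 * ε := by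
    rintro x ⟨-, t, ht, hxt⟩ y ⟨-, s, hs, hys⟩
    have hts : dist (w + t • u) (w + s • u) ≤ 2 * r := by
      rw [dist_add_left, dist_eq_norm, ← sub_smul, norm_smul, hu, mul_one, Real.norm_eq_abs]
      calc |t - s| = |(t - t₀) - (s - t₀)| := by ring_nf
        _ ≤ 2 * r := (abs_sub _ _).trans (by linarith)
    linarith [dist_triangle4 x (w + t • u) (w + s • u) y, dist_comm y (w + s • u)]
  obtain ⟨z, hz, hSz⟩ :=
    exists_forall_dist_le_of_forall_dist_le stdCone_nonempty hε hS (fun x hx => hx.1)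
  refine ⟨z, hz, fun x hxC t ht hxt => ?_⟩
  calc infDist x (lineSpan z) ≤ dist x z :=
        infDist_le_dist_of_mem (Submodule.mem_span_singleton_self z)
    _ ≤ 2 * r + 6 * ε := by linarith [hSz x ⟨hxC, t, ht, hxt⟩]

lemma exists_mem_stdCone_forall_infDist_lineSpan_le_of_abs_coneForm_lt {u : ℝ³} {ρ : ℝ}
    (w : ℝ³) (hρ : 0 < ρ) (hu : |coneForm u| < ρ ^ 4) : ∃ g ∈ stdCone, ∀ x (t : ℝ), t ^ 2 ≤ 4 →
      infDist x (lineSpan g) ≤ dist x (w + t • u) + ‖w‖ + 2 * ρ ^ 2 := by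
  obtain ⟨g, hg, hug⟩ := exists_mem_stdCone_norm_sub_sq_le u
  have hug' : ‖u - g‖ ≤ ρ ^ 2 := le_of_sq_le_sq (by nlinarith) (by positivity)
  refine ⟨g, hg, fun x t ht2 => (infDist_lineSpan_le_dist_add x w u g t).trans ?_⟩
  have ht : |t| ≤ 2 := abs_le_of_sq_le_sq (by linarith) zero_le_two
  gcongr

lemma norm_le_of_abs_coneForm_le {w u : ℝ³} {ρ : ℝ} (hu : ‖u‖ = 1) (hwu : inner ℝ w u = 0)
    (hρ : 0 < ρ) (hρ1 : ρ ≤ 1 / 1000) (hA : |coneForm u| < ρ ^ 4)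
    (hB : |2 * conePolar w u| < 20 * ρ ^ 3) (hC : |coneForm w| ≤ 41 * ρ ^ 3) : ‖w‖ ≤ ρ / 4 := by
  have hQ : coneForm u ≤ 1 / 2 := by
    linarith [le_abs_self (coneForm u), pow_le_of_le_one hρ.le (by linarith) four_ne_zero]
  have hP : conePolar w u ^ 2 ≤ 100 * ρ ^ 6 := by
    have := sq_le_sq' (abs_le.1 hB.le).1 (abs_le.1 hB.le).2
    nlinarith
  refine le_of_sq_le_sq ((norm_sq_le_of_inner_eq_zero hwu hu hQ).trans ?_) (by positivity)
  nlinarith [le_abs_self (coneForm w), pow_pos hρ 3,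
    mul_le_mul_of_nonneg_left hρ1 (pow_pos hρ 2).le, mul_le_mul_of_nonneg_left hρ1 (pow_pos hρ 5).le]

theorem exists_coneLines_cover_of_unit_inner_eq_zero {ε ρ : ℝ} (hε : 0 < ε) (hρ : 0 < ρ)
    (hρ1 : ρ ≤ 1 / 1000) (hερ : ε ≤ ρ ^ 8) {w u : ℝ³} (hu : ‖u‖ = 1) (hwu : inner ℝ w u = 0) :
    ∃ y₁ ∈ stdCone, ∃ y₂ ∈ stdCone, ∀ x, infDist x {y | ∃ t : ℝ, y = w + t • u} ≤ ε →
      infDist x stdCone ≤ ε → ‖x‖ ≤ 1 →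
      infDist x (lineSpan y₁) ≤ ρ ∨ infDist x (lineSpan y₂) ≤ ρ := by
  have hερ' : 16 * ε ≤ ρ := by
    nlinarith [pow_le_pow_of_le_one hρ.le (by linarith : ρ ≤ 1) (by norm_num : 2 ≤ 8)]
  have hparam := fun x => exists_line_param_of_infDist_le (x := x) hu hwu hε (by linarith)
  simp only [coneForm_add_smul] at hparam
  rcases quadratic_sublevel_near_two_points_or hρ (by linarith) hερ with
    ⟨t₁, t₂, hnear⟩ | ⟨hA, hB, hC⟩
  · obtain ⟨y₁, hy₁, h₁⟩ := exists_mem_stdCone_forall_infDist_lineSpan_le (w := w) (r := ρ / 4)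
      hu hε t₁
    obtain ⟨y₂, hy₂, h₂⟩ := exists_mem_stdCone_forall_infDist_lineSpan_le (w := w) (r := ρ / 4)
      hu hε t₂
    refine ⟨y₁, hy₁, y₂, hy₂, fun x hxL hxC hx => ?_⟩
    obtain ⟨t, hxt, ht2, hq⟩ := hparam x hxL hxC hx
    refine (hnear t ht2 hq).imp (fun ht => ?_) (fun ht => ?_)
    · linarith [h₁ x hxC t ht hxt]
    · linarith [h₂ x hxC t ht hxt]
  by_cases hex : ∃ x, infDist x {y | ∃ t : ℝ, y = w + t • u} ≤ ε ∧ infDist x stdCone ≤ ε ∧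
      ‖x‖ ≤ 1
  · obtain ⟨x₀, hx₀L, hx₀C, hx₀⟩ := hex
    obtain ⟨t₀, -, ht₀, hq₀⟩ := hparam x₀ hx₀L hx₀C hx₀
    have hw := norm_le_of_abs_coneForm_le hu hwu hρ hρ1 hA hB (hC t₀ ht₀ hq₀)
    obtain ⟨g, hg, hgx⟩ := exists_mem_stdCone_forall_infDist_lineSpan_le_of_abs_coneForm_lt w hρ hA
    refine ⟨g, hg, g, hg, fun x hxL hxC hx => Or.inl ?_⟩
    obtain ⟨t, hxt, ht2, -⟩ := hparam x hxL hxC hx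
    nlinarith [hgx x t ht2]
  · push Not at hex
    exact ⟨0, zero_mem_stdCone, 0, zero_mem_stdCone,
      fun x hxL hxC hx => absurd hx (hex x hxL hxC).not_ge⟩

theorem exists_coneLines_cover {ε ρ : ℝ} (hε : 0 < ε) (hρ : 0 < ρ) (hρ1 : ρ ≤ 1 / 1000)
    (hερ : ε ≤ ρ ^ 8) (w v : ℝ³) (hv : v ≠ 0) :
    ∃ v₁ v₂ : ℝ³, v₁ ≠ 0 ∧ v₂ ≠ 0 ∧ v₁ ∈ stdCone ∧ v₂ ∈ stdCone ∧
      nbhd {x | ∃ t : ℝ, x = w + t • v} ε ∩ nbhd stdCone ε ∩ closedBall 0 1 ⊆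
        nbhd (lineSpan v₁) ρ ∪ nbhd (lineSpan v₂) ρ := by
  obtain ⟨w', u, hu, hwu, hline⟩ := exists_unit_inner_eq_zero_line_eq w v hv
  obtain ⟨y₁, hy₁, y₂, hy₂, hcover⟩ :=
    exists_coneLines_cover_of_unit_inner_eq_zero hε hρ hρ1 hερ hu hwu
  obtain ⟨v₁, hv₁, hv₁C, h₁⟩ := exists_ne_zero_mem_stdCone_lineSpan_subset hy₁
  obtain ⟨v₂, hv₂, hv₂C, h₂⟩ := exists_ne_zero_mem_stdCone_lineSpan_subset hy₂
  refine ⟨v₁, v₂, hv₁, hv₂, hv₁C, hv₂C, fun x ⟨⟨hxL, hxC⟩, hx⟩ => ?_⟩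
  rw [nbhd, hline] at hxL
  exact (hcover x hxL hxC (mem_closedBall_zero_iff.1 hx)).imp
    (infDist_lineSpan_le_of_subset h₁).trans (infDist_lineSpan_le_of_subset h₂).trans

/-- Proposition B.7: for any affine line `L ⊂ ℝ³`, the intersection
`L(δ^c) ∩ C(δ) ∩ B(0,1)` is contained in the `δ^{c²/5}`-neighbourhood of at most two
lines on `C`. -/
theorem line_nbhd_inter_cone :
    ∃ c₀ : ℝ, 0 < c₀ ∧ ∀ c : ℝ, 0 < c → c ≤ c₀ →
      ∃ δ₀ : ℝ, 0 < δ₀ ∧ ∀ δ : ℝ, 0 < δ → δ < δ₀ →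
      ∀ w v : EuclideanSpace ℝ (Fin 3), v ≠ 0 →
        ∃ v₁ v₂ : EuclideanSpace ℝ (Fin 3), v₁ ≠ 0 ∧ v₂ ≠ 0 ∧
          v₁ ∈ stdCone ∧ v₂ ∈ stdCone ∧
          nbhd {x | ∃ t : ℝ, x = w + t • v} (δ ^ c) ∩ nbhd stdCone δ ∩
              Metric.closedBall 0 1 ⊆
            nbhd (lineSpan v₁) (δ ^ (c ^ 2 / 5)) ∪ nbhd (lineSpan v₂) (δ ^ (c ^ 2 / 5)) := by
  refine ⟨5 / 8, by norm_num, fun c hc hc₀ => ?_⟩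
  refine ⟨(1 / 1000) ^ (5 / c ^ 2), by positivity, fun δ hδ hδδ₀ w v hv => ?_⟩
  have hδ1 : δ < 1 := hδδ₀.trans_le (Real.rpow_le_one (by norm_num) (by norm_num) (by positivity))
  have hρ1 : δ ^ (c ^ 2 / 5) ≤ 1 / 1000 :=
    calc δ ^ (c ^ 2 / 5) ≤ ((1 / 1000) ^ (5 / c ^ 2)) ^ (c ^ 2 / 5) :=
          Real.rpow_le_rpow hδ.le hδδ₀.le (by positivity)
      _ = 1 / 1000 := by
          rw [← Real.rpow_mul (by norm_num), div_mul_div_cancel₀ (by positivity),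
            div_self (by norm_num), Real.rpow_one]
  have hερ : δ ^ c ≤ (δ ^ (c ^ 2 / 5)) ^ 8 := by
    rw [← Real.rpow_mul_natCast hδ.le]
    exact Real.rpow_le_rpow_of_exponent_ge hδ hδ1.le (by push_cast; nlinarith)
  have hδε : δ ≤ δ ^ c := by
    simpa using Real.rpow_le_rpow_of_exponent_ge hδ hδ1.le (hc₀.trans (by norm_num : (5 / 8 : ℝ) ≤ 1))
  obtain ⟨v₁, v₂, hv₁, hv₂, hv₁C, hv₂C, hcover⟩ := exists_coneLines_cover
    (Real.rpow_pos_of_pos hδ c) (Real.rpow_pos_of_pos hδ _) hρ1 hερ w v hv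
  exact ⟨v₁, v₂, hv₁, hv₂, hv₁C, hv₂C, fun x ⟨⟨hxL, hxC⟩, hx⟩ =>
    hcover ⟨⟨hxL, (show infDist x stdCone ≤ δ from hxC).trans hδε⟩, hx⟩⟩
end

section
/- Let J ⊂ ℝ be an interval and let γ = (γ₁, γ₂, γ₃) : J → ℝ³ be a twice differentiable curve with γ₃(θ) ≠ 0 for all θ ∈ J. Define λ : J → ℝ³ by λ(θ) = (γ₁(θ)/γ₃(θ), γ₂(θ)/γ₃(θ), 1). Then for every θ ∈ J, γ''(θ) · (γ(θ) × γ'(θ)) = γ₃(θ)³ · (λ''(θ) · (λ(θ) × λ'(θ))). In particular, if span{γ(θ), γ'(θ), γ''(θ)} = ℝ³ then λ''(θ) ≠ 0. -/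
/-!
Near `θ` the curve `λ` is the rescaling `c • γ` with `c = γ₃⁻¹`. For any rescaling,
`(c γ)' = c' γ + c γ'` and `(c γ)'' = c'' γ + 2 c' γ' + c γ''`, so `(c γ) × (c γ)' = c² (γ × γ')`
and pairing it with `(c γ)''` leaves `c³ γ'' · (γ × γ')`: every term containing `γ` or `γ'` twice
drops out of the triple product.
-/

open Matrix Filter Topology

section Rescaling

variable {R : Type*} [CommRing R]

theorem smul_cross_deriv_smul (c c' : R) (v v' : Fin 3 → R) :
    (c • v) ⨯₃ (c • v' + c' • v) = c ^ 2 • (v ⨯₃ v') := by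
  simp only [map_add, map_smul, LinearMap.smul_apply, cross_self, smul_zero, add_zero, smul_smul,
    sq]

theorem second_deriv_smul_dot_cross (c c' c'' : R) (v v' v'' : Fin 3 → R) :
    (c'' • v + (2 * c') • v' + c • v'') ⬝ᵥ (v ⨯₃ v') = c * (v'' ⬝ᵥ (v ⨯₃ v')) := by
  simp only [add_dotProduct, smul_dotProduct, dot_self_cross, dot_cross_self, smul_eq_mul,
    mul_zero, zero_add]

end Rescaling

section SecondDerivative

variable {𝕜 F : Type*} [NontriviallyNormedField 𝕜] [NormedAddCommGroup F] [NormedSpace 𝕜 F]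

theorem eventually_differentiableAt_of_deriv_ne_zero {f : 𝕜 → F} {x : 𝕜}
    (hf : ContinuousAt (deriv f) x) (hx : deriv f x ≠ 0) :
    ∀ᶠ t in 𝓝 x, DifferentiableAt 𝕜 f t :=
  (hf.eventually_ne hx).mono fun _ ht =>
    by_contra fun h => ht (deriv_zero_of_not_differentiableAt h)

theorem hasDerivAt_deriv_smul {c c' : 𝕜 → 𝕜} {v v' : 𝕜 → F} {c'' : 𝕜} {v'' : F} {x : 𝕜}
    (hc : ∀ᶠ t in 𝓝 x, HasDerivAt c (c' t) t) (hv : ∀ᶠ t in 𝓝 x, HasDerivAt v (v' t) t)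
    (hc' : HasDerivAt c' c'' x) (hv' : HasDerivAt v' v'' x) :
    HasDerivAt (deriv fun t => c t • v t) (c'' • v x + (2 * c' x) • v' x + c x • v'') x := by
  have hderiv : deriv (fun t => c t • v t) =ᶠ[𝓝 x] fun t => c t • v' t + c' t • v t :=
    (hc.and hv).mono fun t h => (h.1.smul h.2).deriv
  convert ((hc.self_of_nhds.smul hv').add (hc'.smul hv.self_of_nhds)).congr_of_eventuallyEq
    hderiv using 1
  module

end SecondDerivative

theorem dotProduct_cross_ne_zero_of_span_eq_top {a b c : Fin 3 → ℝ}
    (h : Submodule.span ℝ {a, b, c} = ⊤) : c ⬝ᵥ (a ⨯₃ b) ≠ 0 := by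
  have hrange : Set.range ![a, b, c] = {a, b, c} := by
    ext x
    simp only [range_cons, range_empty, Set.union_empty, Set.mem_union, Set.mem_singleton_iff,
      Set.mem_insert_iff]
  have hli : LinearIndependent ℝ ![a, b, c] :=
    linearIndependent_of_top_le_span_of_card_eq_finrank (by rw [hrange, h]) (by simp)
  rw [triple_product_permutation, triple_product_eq_det]
  exact (isUnit_iff_isUnit_det _).mp (linearIndependent_rows_iff_isUnit.mp hli) |>.ne_zero

theorem deriv_deriv_inv_smul_dot_cross {γ : ℝ → Fin 3 → ℝ} {θ : ℝ} (i : Fin 3)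
    (hγ : DifferentiableAt ℝ γ θ) (hγ' : DifferentiableAt ℝ (deriv γ) θ) (hi : γ θ i ≠ 0) :
    deriv (deriv fun t => (γ t i)⁻¹ • γ t) θ ⬝ᵥ
        (((γ θ i)⁻¹ • γ θ) ⨯₃ deriv (fun t => (γ t i)⁻¹ • γ t) θ) =
      (γ θ i)⁻¹ ^ 3 * (deriv (deriv γ) θ ⬝ᵥ (γ θ ⨯₃ deriv γ θ)) := by
  have hderiv : HasDerivAt (fun t => (γ t i)⁻¹ • γ t)
      ((γ θ i)⁻¹ • deriv γ θ + (-deriv γ θ i / γ θ i ^ 2) • γ θ) θ :=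
    ((hasDerivAt_pi.1 hγ.hasDerivAt i).inv hi).smul hγ.hasDerivAt
  rw [hderiv.deriv, smul_cross_deriv_smul, dotProduct_smul, smul_eq_mul]
  rcases eq_or_ne (deriv γ θ) 0 with hγ'_zero | hγ'_ne
  · simp [hγ'_zero]
  -- the second-order formula needs `γ` differentiable near `θ`, which follows from `γ'(θ) ≠ 0`
  have hγ_near := eventually_differentiableAt_of_deriv_ne_zero hγ'.continuousAt hγ'_ne
  have hi_near : ∀ᶠ t in 𝓝 θ, γ t i ≠ 0 :=
    (differentiableAt_pi.1 hγ i).continuousAt.eventually_ne hi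
  have hinv : ∀ᶠ t in 𝓝 θ, HasDerivAt (fun t => (γ t i)⁻¹) (-deriv γ t i / γ t i ^ 2) t := by
    filter_upwards [hγ_near, hi_near] with t hd ht
    exact (hasDerivAt_pi.1 hd.hasDerivAt i).inv ht
  have hinv' : DifferentiableAt ℝ (fun t => -deriv γ t i / γ t i ^ 2) θ :=
    (differentiableAt_pi.1 hγ' i).neg.div ((differentiableAt_pi.1 hγ i).pow 2) (pow_ne_zero 2 hi)
  rw [(hasDerivAt_deriv_smul hinv (hγ_near.mono fun t h => h.hasDerivAt) hinv'.hasDerivAt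
    hγ'.hasDerivAt).deriv, second_deriv_smul_dot_cross]
  ring

theorem central_projection_curvature_general (J : Set ℝ)
    (γ : ℝ → (Fin 3 → ℝ))
    (hγ₁ : ∀ θ ∈ J, DifferentiableAt ℝ γ θ)
    (hγ₂ : ∀ θ ∈ J, DifferentiableAt ℝ (deriv γ) θ)
    (hγ₃ : ∀ θ ∈ J, γ θ 2 ≠ 0) :
    ∀ θ ∈ J,
      (deriv (deriv γ) θ) ⬝ᵥ ((γ θ) ⨯₃ (deriv γ θ)) =
        (γ θ 2) ^ 3 *
          ((deriv (deriv (fun t => ![γ t 0 / γ t 2, γ t 1 / γ t 2, 1])) θ) ⬝ᵥ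
            ((![γ θ 0 / γ θ 2, γ θ 1 / γ θ 2, 1]) ⨯₃
              (deriv (fun t => ![γ t 0 / γ t 2, γ t 1 / γ t 2, 1]) θ))) ∧
      (Submodule.span ℝ {γ θ, deriv γ θ, deriv (deriv γ) θ} = ⊤ →
        deriv (deriv (fun t => ![γ t 0 / γ t 2, γ t 1 / γ t 2, 1])) θ ≠ 0) := by
  intro θ hθ
  have hne := hγ₃ θ hθ
  have hproj : (fun t => ![γ t 0 / γ t 2, γ t 1 / γ t 2, 1]) =ᶠ[𝓝 θ]
      fun t => (γ t 2)⁻¹ • γ t := by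
    filter_upwards [(differentiableAt_pi.1 (hγ₁ θ hθ) 2).continuousAt.eventually_ne hne]
      with t ht
    ext i
    fin_cases i <;> simp [div_eq_inv_mul, ht]
  have key : deriv (deriv γ) θ ⬝ᵥ (γ θ ⨯₃ deriv γ θ) =
      γ θ 2 ^ 3 * (deriv (deriv (fun t => ![γ t 0 / γ t 2, γ t 1 / γ t 2, 1])) θ ⬝ᵥ
        (![γ θ 0 / γ θ 2, γ θ 1 / γ θ 2, 1] ⨯₃
          deriv (fun t => ![γ t 0 / γ t 2, γ t 1 / γ t 2, 1]) θ)) := by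
    rw [hproj.deriv.deriv_eq, hproj.deriv_eq, hproj.eq_of_nhds,
      deriv_deriv_inv_smul_dot_cross 2 (hγ₁ θ hθ) (hγ₂ θ hθ) hne]
    field_simp
  refine ⟨key, fun hspan hzero => dotProduct_cross_ne_zero_of_span_eq_top hspan ?_⟩
  rw [key, hzero, zero_dotProduct, mul_zero]

/-- Remark 3.6 (central projection computation): if `γ = (γ₁, γ₂, γ₃)` is twice
differentiable on an interval `J` with `γ₃ ≠ 0`, and
`λ = (γ₁/γ₃, γ₂/γ₃, 1)`, then `γ'' · (γ × γ') = γ₃³ · (λ'' · (λ × λ'))`; in particular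
the non-degeneracy `span{γ, γ', γ''} = ℝ³` forces `λ'' ≠ 0`. -/
theorem central_projection_curvature (J : Set ℝ) (hJ : J.OrdConnected)
    (γ : ℝ → (Fin 3 → ℝ))
    (hγ₁ : ∀ θ ∈ J, DifferentiableAt ℝ γ θ)
    (hγ₂ : ∀ θ ∈ J, DifferentiableAt ℝ (deriv γ) θ)
    (hγ₃ : ∀ θ ∈ J, γ θ 2 ≠ 0) :
    ∀ θ ∈ J,
      (deriv (deriv γ) θ) ⬝ᵥ ((γ θ) ⨯₃ (deriv γ θ)) =
        (γ θ 2) ^ 3 *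
          ((deriv (deriv (fun t => ![γ t 0 / γ t 2, γ t 1 / γ t 2, 1])) θ) ⬝ᵥ
            ((![γ θ 0 / γ θ 2, γ θ 1 / γ θ 2, 1]) ⨯₃
              (deriv (fun t => ![γ t 0 / γ t 2, γ t 1 / γ t 2, 1]) θ))) ∧
      (Submodule.span ℝ {γ θ, deriv γ θ, deriv (deriv γ) θ} = ⊤ →
        deriv (deriv (fun t => ![γ t 0 / γ t 2, γ t 1 / γ t 2, 1])) θ ≠ 0) :=
  central_projection_curvature_general J γ hγ₁ hγ₂ hγ₃
end
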